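/- arXiv:2012.10982 — 5 statements merged into one kernel-verified Lean document; each statement's English description precedes it below -/
import Mathlib

section
/- (Lemma on block relations.) Under the exchange relation R_{m+n₂}·(M⊠M) = (M⊠'M)·R_{n₁+m} for the block matrix M, the four blocks satisfy: (i) for each block B ∈ {M11, M12, M21, M22}, R_r·(B⊠B) = (B⊠'B)·R_c and also (R̄_r)ᵀ·(B⊠B) = (B⊠'B)·(R̄_c)ᵀ, where (r,c) = (m,n₁), (m,m), (n₂,n₁), (n₂,m) for B = M11, M12, M21, M22 respectively; (ii) M12⊠'M11 = R_m·(M12⊠M11); (iii) M12⊠M22 = (M12⊠'M22)·R_m; (iv) M11⊠M21 = (M11⊠'M21)·R_{n₁}; (v) M22⊠'M21 = R_{n₂}·(M22⊠M21); (vi) M12⊠M21 = M12⊠'M21; (vii) M11⊠M22 − M11⊠'M22 = (q−q⁻¹)·(M12⊠'M21)·P_{m,n₁}, where P_{m,n₁} is the matrix with rows indexed by Fin m × Fin n₁ and columns by Fin n₁ × Fin m whose entry at ((a,b),(c,d)) is 1 if a=d and b=c, and 0 otherwise. -/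
open Matrix

variable {A : Type*} [Ring A]

/-- Kulish–Sklyanin trigonometric R-matrix with deformation parameter `q`
(`qi` denotes the inverse of `q`). -/
def Rmat (A : Type*) [Ring A] (q qi : A) (n : ℕ) :
    Matrix (Fin n × Fin n) (Fin n × Fin n) A := fun x y =>
  if x.1 = x.2 ∧ x.2 = y.1 ∧ y.1 = y.2 then q
  else if x.1 = y.1 ∧ x.2 = y.2 then 1
  else if x.1 = y.2 ∧ x.2 = y.1 ∧ x.2 < x.1 then q - qi
  else 0

/-- Permutation-type matrix with (possibly) rectangular tensor indices. -/
def PmatG (A : Type*) [Ring A] (m n : ℕ) :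
    Matrix (Fin m × Fin n) (Fin n × Fin m) A := fun x y =>
  if x.1 = y.2 ∧ x.2 = y.1 then 1 else 0

/-- The permutation matrix `P`. -/
def Pmat (A : Type*) [Ring A] (n : ℕ) :
    Matrix (Fin n × Fin n) (Fin n × Fin n) A := PmatG A n n

/-- Kronecker product `X ⊠ Y` : entry at `((i,a),(j,b))` is `X i j * Y a b`. -/
def kron {I J K L : Type*} (X : Matrix I J A) (Y : Matrix K L A) :
    Matrix (I × K) (J × L) A := fun p r => X p.1 r.1 * Y p.2 r.2

/-- Opposite-order Kronecker product `X ⊠' Y` : entry at `((i,a),(j,b))` is `Y a b * X i j`. -/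
def kron' {I J K L : Type*} (X : Matrix I J A) (Y : Matrix K L A) :
    Matrix (I × K) (J × L) A := fun p r => Y p.2 r.2 * X p.1 r.1

lemma Rmat_eq_zero {q qi : A} {N : ℕ} {x k : Fin N × Fin N}
    (h1 : k ≠ x) (h2 : k ≠ (x.2, x.1)) : Rmat A q qi N x k = 0 := by
  obtain ⟨x1, x2⟩ := x; obtain ⟨k1, k2⟩ := k
  simp only [Rmat]
  split_ifs with a b c
  · exact absurd (by simp_all [Prod.ext_iff] : ((k1,k2):Fin N × Fin N) = (x1,x2)) h1
  · exact absurd (by simp_all [Prod.ext_iff] : ((k1,k2):Fin N × Fin N) = (x1,x2)) h1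
  · exact absurd (by simp_all [Prod.ext_iff] : ((k1,k2):Fin N × Fin N) = (x2,x1)) h2
  · rfl

lemma Rmat_diag {q qi : A} {N : ℕ} (x : Fin N) :
    Rmat A q qi N (x, x) (x, x) = q := by simp [Rmat]

lemma Rmat_one {q qi : A} {N : ℕ} {x1 x2 : Fin N} (h : x1 ≠ x2) :
    Rmat A q qi N (x1, x2) (x1, x2) = 1 := by
  simp [Rmat, h]

lemma Rmat_swap {q qi : A} {N : ℕ} {x1 x2 : Fin N} (h : x2 < x1) :
    Rmat A q qi N (x1, x2) (x2, x1) = q - qi := by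
  have hne : x1 ≠ x2 := (h.ne).symm
  simp [Rmat, h, hne, hne.symm]

lemma Rmat_mul_apply {q qi : A} {N : ℕ} {J : Type*} [Fintype J] (X : Matrix (Fin N × Fin N) J A)
    (x1 x2 : Fin N) (y : J) :
    (Rmat A q qi N * X) (x1, x2) y =
      if x1 = x2 then q * X (x1, x1) y
      else if x2 < x1 then X (x1, x2) y + (q - qi) * X (x2, x1) y
      else X (x1, x2) y := by
  rw [Matrix.mul_apply]
  rcases eq_or_ne x1 x2 with h | h
  · subst h
    rw [Finset.sum_eq_single (x1, x1)]
    · simp [Rmat_diag]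
    · intro b _ hb
      rw [Rmat_eq_zero hb hb, zero_mul]
    · simp
  · rw [if_neg h]
    rcases lt_or_ge x2 x1 with hlt | hle
    · rw [if_pos hlt]
      have hij : ((x1, x2) : Fin N × Fin N) ≠ (x2, x1) := by
        simp [Prod.ext_iff, h]
      rw [← Finset.sum_subset (Finset.subset_univ {((x1, x2) : Fin N × Fin N), (x2, x1)})
          (fun k _ hk => by
            simp only [Finset.mem_insert, Finset.mem_singleton, not_or] at hk
            rw [Rmat_eq_zero hk.1 hk.2, zero_mul]),
        Finset.sum_pair hij, Rmat_one h, Rmat_swap hlt, one_mul]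
    · rw [if_neg (not_lt.mpr hle)]
      rw [Finset.sum_eq_single (x1, x2)]
      · rw [Rmat_one h, one_mul]
      · intro b _ hb
        rcases eq_or_ne b (x2, x1) with rfl | hb2
        · have : ¬ x2 < x1 := not_lt.mpr hle
          simp only [Rmat]
          rw [if_neg (by tauto), if_neg (by simp [Prod.ext_iff]; tauto),
            if_neg (by tauto), zero_mul]
        · rw [Rmat_eq_zero hb hb2, zero_mul]
      · simp

lemma mul_Rmat_apply {q qi : A} {N : ℕ} {I : Type*} [Fintype I] (X : Matrix I (Fin N × Fin N) A)
    (x : I) (y1 y2 : Fin N) :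
    (X * Rmat A q qi N) x (y1, y2) =
      if y1 = y2 then X x (y1, y1) * q
      else if y1 < y2 then X x (y1, y2) + X x (y2, y1) * (q - qi)
      else X x (y1, y2) := by
  rw [Matrix.mul_apply]
  rcases eq_or_ne y1 y2 with h | h
  · subst h
    rw [Finset.sum_eq_single (y1, y1)]
    · rw [Rmat_diag]; simp
    · intro b _ hb
      rw [Rmat_eq_zero (q := q) (qi := qi) (x := b) ?_ ?_, mul_zero]
      · exact fun e => hb (by simp [Prod.ext_iff] at e ⊢; tauto)
      · exact fun e => hb (by simp [Prod.ext_iff] at e ⊢; tauto)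
    · simp
  · rw [if_neg h]
    rcases lt_or_ge y1 y2 with hlt | hle
    · rw [if_pos hlt]
      have hij : ((y1, y2) : Fin N × Fin N) ≠ (y2, y1) := by
        simp [Prod.ext_iff, h]
      rw [← Finset.sum_subset (Finset.subset_univ {((y1, y2) : Fin N × Fin N), (y2, y1)})
          (fun k _ hk => by
            simp only [Finset.mem_insert, Finset.mem_singleton, not_or] at hk
            rw [Rmat_eq_zero (x := k) ?_ ?_, mul_zero]
            · exact fun e => hk.1 (by simp [Prod.ext_iff] at e ⊢; tauto)
            · exact fun e => hk.2 (by simp [Prod.ext_iff] at e ⊢; tauto)),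
        Finset.sum_pair hij, Rmat_one h, Rmat_swap hlt, mul_one]
    · rw [if_neg (not_lt.mpr hle)]
      rw [Finset.sum_eq_single (y1, y2)]
      · rw [Rmat_one h, mul_one]
      · intro b _ hb
        rcases eq_or_ne b (y2, y1) with rfl | hb2
        · have : ¬ y1 < y2 := not_lt.mpr hle
          simp only [Rmat]
          rw [if_neg (by tauto), if_neg (by simp [Prod.ext_iff]; tauto),
            if_neg (by tauto), mul_zero]
        · rw [Rmat_eq_zero (x := b) ?_ ?_, mul_zero]
          · exact fun e => hb (by simp [Prod.ext_iff] at e ⊢; tauto)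
          · exact fun e => hb2 (by simp [Prod.ext_iff] at e ⊢; tauto)
      · simp

lemma RmatT_mul_apply {q qi : A} {N : ℕ} {J : Type*} [Fintype J] (X : Matrix (Fin N × Fin N) J A)
    (x1 x2 : Fin N) (y : J) :
    ((Rmat A qi q N)ᵀ * X) (x1, x2) y =
      if x1 = x2 then qi * X (x1, x1) y
      else if x1 < x2 then X (x1, x2) y + (qi - q) * X (x2, x1) y
      else X (x1, x2) y := by
  rw [Matrix.mul_apply]
  simp only [Matrix.transpose_apply]
  rcases eq_or_ne x1 x2 with h | h
  · subst h
    rw [Finset.sum_eq_single (x1, x1)]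
    · rw [Rmat_diag]; simp
    · intro b _ hb
      rw [Rmat_eq_zero (x := b) ?_ ?_, zero_mul]
      · exact fun e => hb (by simp [Prod.ext_iff] at e ⊢; tauto)
      · exact fun e => hb (by simp [Prod.ext_iff] at e ⊢; tauto)
    · simp
  · rw [if_neg h]
    rcases lt_or_ge x1 x2 with hlt | hle
    · rw [if_pos hlt]
      have hij : ((x1, x2) : Fin N × Fin N) ≠ (x2, x1) := by
        simp [Prod.ext_iff, h]
      rw [← Finset.sum_subset (Finset.subset_univ {((x1, x2) : Fin N × Fin N), (x2, x1)})
          (fun k _ hk => by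
            simp only [Finset.mem_insert, Finset.mem_singleton, not_or] at hk
            rw [Rmat_eq_zero (x := k) ?_ ?_, zero_mul]
            · exact fun e => hk.1 (by simp [Prod.ext_iff] at e ⊢; tauto)
            · exact fun e => hk.2 (by simp [Prod.ext_iff] at e ⊢; tauto)),
        Finset.sum_pair hij, Rmat_one h, Rmat_swap hlt, one_mul]
    · rw [if_neg (not_lt.mpr hle)]
      rw [Finset.sum_eq_single (x1, x2)]
      · rw [Rmat_one h, one_mul]
      · intro b _ hb
        rcases eq_or_ne b (x2, x1) with rfl | hb2
        · have : ¬ x1 < x2 := not_lt.mpr hle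
          simp only [Rmat]
          rw [if_neg (by tauto), if_neg (by simp [Prod.ext_iff]; tauto),
            if_neg (by tauto), zero_mul]
        · rw [Rmat_eq_zero (x := b) ?_ ?_, zero_mul]
          · exact fun e => hb (by simp [Prod.ext_iff] at e ⊢; tauto)
          · exact fun e => hb2 (by simp [Prod.ext_iff] at e ⊢; tauto)
      · simp

lemma mul_RmatT_apply {q qi : A} {N : ℕ} {I : Type*} [Fintype I] (X : Matrix I (Fin N × Fin N) A)
    (x : I) (y1 y2 : Fin N) :
    (X * (Rmat A qi q N)ᵀ) x (y1, y2) =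
      if y1 = y2 then X x (y1, y1) * qi
      else if y2 < y1 then X x (y1, y2) + X x (y2, y1) * (qi - q)
      else X x (y1, y2) := by
  rw [Matrix.mul_apply]
  simp only [Matrix.transpose_apply]
  rcases eq_or_ne y1 y2 with h | h
  · subst h
    rw [Finset.sum_eq_single (y1, y1)]
    · rw [Rmat_diag]; simp
    · intro b _ hb
      rw [Rmat_eq_zero (x := (y1, y1)) ?_ ?_, mul_zero]
      · exact fun e => hb (by simp [Prod.ext_iff] at e ⊢; tauto)
      · exact fun e => hb (by simp [Prod.ext_iff] at e ⊢; tauto)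
    · simp
  · rw [if_neg h]
    rcases lt_or_ge y2 y1 with hlt | hle
    · rw [if_pos hlt]
      have hij : ((y1, y2) : Fin N × Fin N) ≠ (y2, y1) := by
        simp [Prod.ext_iff, h]
      rw [← Finset.sum_subset (Finset.subset_univ {((y1, y2) : Fin N × Fin N), (y2, y1)})
          (fun k _ hk => by
            simp only [Finset.mem_insert, Finset.mem_singleton, not_or] at hk
            rw [Rmat_eq_zero (x := (y1, y2)) ?_ ?_, mul_zero]
            · exact fun e => hk.1 (by simp [Prod.ext_iff] at e ⊢; tauto)
            · exact fun e => hk.2 (by simp [Prod.ext_iff] at e ⊢; tauto)),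
        Finset.sum_pair hij, Rmat_one h, Rmat_swap hlt, mul_one]
    · rw [if_neg (not_lt.mpr hle)]
      rw [Finset.sum_eq_single (y1, y2)]
      · rw [Rmat_one h, mul_one]
      · intro b _ hb
        rcases eq_or_ne b (y2, y1) with rfl | hb2
        · have : ¬ y2 < y1 := not_lt.mpr hle
          simp only [Rmat]
          rw [if_neg (by tauto), if_neg (by simp [Prod.ext_iff]; tauto),
            if_neg (by tauto), mul_zero]
        · rw [Rmat_eq_zero (x := (y1, y2)) ?_ ?_, mul_zero]
          · exact fun e => hb (by simp [Prod.ext_iff] at e ⊢; tauto)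
          · exact fun e => hb2 (by simp [Prod.ext_iff] at e ⊢; tauto)
      · simp

lemma block_rel (q qi : A) (hq : ∀ a : A, Commute q a) (hqi : ∀ a : A, Commute qi a)
    {r c : ℕ} (B : Matrix (Fin r) (Fin c) A)
    (H : ∀ (x1 x2 : Fin r) (y1 y2 : Fin c),
      (if x1 = x2 then q * (B x1 y1 * B x1 y2)
       else if x2 < x1 then B x1 y1 * B x2 y2 + (q - qi) * (B x2 y1 * B x1 y2)
       else B x1 y1 * B x2 y2)
      = (if y1 = y2 then B x2 y1 * B x1 y1 * q
         else if y1 < y2 then B x2 y2 * B x1 y1 + B x2 y1 * B x1 y2 * (q - qi)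
         else B x2 y2 * B x1 y1)) :
    Rmat A q qi r * kron B B = kron' B B * Rmat A q qi c ∧
    (Rmat A qi q r)ᵀ * kron B B = kron' B B * (Rmat A qi q c)ᵀ := by
  have hcq : ∀ a : A, q * a = a * q := fun a => (hq a).eq
  have hcqi : ∀ a : A, qi * a = a * qi := fun a => (hqi a).eq
  constructor
  · ext ⟨x1, x2⟩ ⟨y1, y2⟩
    rw [Rmat_mul_apply, mul_Rmat_apply]
    simpa [kron, kron'] using H x1 x2 y1 y2
  · ext ⟨x1, x2⟩ ⟨y1, y2⟩
    rw [RmatT_mul_apply, mul_RmatT_apply]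
    simp only [kron, kron']
    have h := H x1 x2 y1 y2
    rcases lt_trichotomy x1 x2 with hx | hx | hx
    · rw [if_neg hx.ne, if_neg (asymm hx)] at h
      rw [if_neg hx.ne, if_pos hx]
      rcases lt_trichotomy y1 y2 with hy | hy | hy
      · rw [if_neg hy.ne, if_pos hy] at h
        rw [if_neg hy.ne, if_neg (asymm hy)]
        linear_combination (norm := noncomm_ring)
          h + hcqi (B x2 y1 * B x1 y2) - hcq (B x2 y1 * B x1 y2)
      · subst hy
        rw [if_pos rfl] at h
        rw [if_pos rfl]
        linear_combination (norm := noncomm_ring)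
          h + hcqi (B x2 y1 * B x1 y1) - hcq (B x2 y1 * B x1 y1)
      · rw [if_neg hy.ne', if_neg (not_lt.mpr hy.le)] at h
        rw [if_neg hy.ne', if_pos hy]
        linear_combination (norm := noncomm_ring)
          h + hcqi (B x2 y1 * B x1 y2) - hcq (B x2 y1 * B x1 y2)
    · subst hx
      rw [if_pos rfl] at h
      rw [if_pos rfl]
      rcases lt_trichotomy y1 y2 with hy | hy | hy
      · rw [if_neg hy.ne, if_pos hy] at h
        rw [if_neg hy.ne, if_neg (asymm hy)]
        linear_combination (norm := noncomm_ring)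
          h + hcqi (B x1 y1 * B x1 y2) - hcq (B x1 y1 * B x1 y2)
      · subst hy
        rw [if_pos rfl] at h
        rw [if_pos rfl]
        linear_combination (norm := noncomm_ring)
          h + hcqi (B x1 y1 * B x1 y1) - hcq (B x1 y1 * B x1 y1)
      · rw [if_neg hy.ne', if_neg (not_lt.mpr hy.le)] at h
        rw [if_neg hy.ne', if_pos hy]
        linear_combination (norm := noncomm_ring)
          h + hcqi (B x1 y1 * B x1 y2) - hcq (B x1 y1 * B x1 y2)
    · rw [if_neg hx.ne', if_pos hx] at h
      rw [if_neg hx.ne', if_neg (not_lt.mpr hx.le)]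
      rcases lt_trichotomy y1 y2 with hy | hy | hy
      · rw [if_neg hy.ne, if_pos hy] at h
        rw [if_neg hy.ne, if_neg (asymm hy)]
        linear_combination (norm := noncomm_ring)
          h + hcqi (B x2 y1 * B x1 y2) - hcq (B x2 y1 * B x1 y2)
      · subst hy
        rw [if_pos rfl] at h
        rw [if_pos rfl]
        linear_combination (norm := noncomm_ring)
          h + hcqi (B x2 y1 * B x1 y1) - hcq (B x2 y1 * B x1 y1)
      · rw [if_neg hy.ne', if_neg (not_lt.mpr hy.le)] at h
        rw [if_neg hy.ne', if_pos hy]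
        linear_combination (norm := noncomm_ring)
          h + hcqi (B x2 y1 * B x1 y2) - hcq (B x2 y1 * B x1 y2)
/-- block relations for the transport matrix, Lemma `lm:MM`. -/
theorem stmt3 (q qi : A) (hq : ∀ a : A, Commute q a) (hqi : ∀ a : A, Commute qi a)
    (hqinv : q * qi = 1) (hqinv' : qi * q = 1)
    (m n₁ n₂ : ℕ) (hm : 1 ≤ m) (hn₁ : 1 ≤ n₁) (hn₂ : 1 ≤ n₂)
    (M11 : Matrix (Fin m) (Fin n₁) A) (M12 : Matrix (Fin m) (Fin m) A)
    (M21 : Matrix (Fin n₂) (Fin n₁) A) (M22 : Matrix (Fin n₂) (Fin m) A)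
    (hex : Rmat A q qi (m + n₂) *
        kron (Matrix.reindex finSumFinEquiv finSumFinEquiv (fromBlocks M11 M12 M21 M22))
          (Matrix.reindex finSumFinEquiv finSumFinEquiv (fromBlocks M11 M12 M21 M22)) =
      kron' (Matrix.reindex finSumFinEquiv finSumFinEquiv (fromBlocks M11 M12 M21 M22))
          (Matrix.reindex finSumFinEquiv finSumFinEquiv (fromBlocks M11 M12 M21 M22)) *
        Rmat A q qi (n₁ + m)) :
    -- (i) each block satisfies the homogeneous exchange relations
    (Rmat A q qi m * kron M11 M11 = kron' M11 M11 * Rmat A q qi n₁) ∧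
    ((Rmat A qi q m)ᵀ * kron M11 M11 = kron' M11 M11 * (Rmat A qi q n₁)ᵀ) ∧
    (Rmat A q qi m * kron M12 M12 = kron' M12 M12 * Rmat A q qi m) ∧
    ((Rmat A qi q m)ᵀ * kron M12 M12 = kron' M12 M12 * (Rmat A qi q m)ᵀ) ∧
    (Rmat A q qi n₂ * kron M21 M21 = kron' M21 M21 * Rmat A q qi n₁) ∧
    ((Rmat A qi q n₂)ᵀ * kron M21 M21 = kron' M21 M21 * (Rmat A qi q n₁)ᵀ) ∧
    (Rmat A q qi n₂ * kron M22 M22 = kron' M22 M22 * Rmat A q qi m) ∧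
    ((Rmat A qi q n₂)ᵀ * kron M22 M22 = kron' M22 M22 * (Rmat A qi q m)ᵀ) ∧
    -- (ii)
    (kron' M12 M11 = Rmat A q qi m * kron M12 M11) ∧
    -- (iii)
    (kron M12 M22 = kron' M12 M22 * Rmat A q qi m) ∧
    -- (iv)
    (kron M11 M21 = kron' M11 M21 * Rmat A q qi n₁) ∧
    -- (v)
    (kron' M22 M21 = Rmat A q qi n₂ * kron M22 M21) ∧
    -- (vi)
    (kron M12 M21 = kron' M12 M21) ∧
    -- (vii)
    (kron M11 M22 - kron' M11 M22 = (q - qi) • (kron' M12 M21 * PmatG A m n₁)) := by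
  have hcq : ∀ a : A, q * a = a * q := fun a => (hq a).eq
  have hcqi : ∀ a : A, qi * a = a * qi := fun a => (hqi a).eq
  set Mb : Matrix (Fin (m + n₂)) (Fin (n₁ + m)) A :=
    Matrix.reindex finSumFinEquiv finSumFinEquiv (fromBlocks M11 M12 M21 M22) with hMbdef
  -- entry lemmas
  have hMb11 : ∀ (i : Fin m) (j : Fin n₁), Mb (Fin.castAdd n₂ i) (Fin.castAdd m j) = M11 i j := by
    intro i j
    simp [hMbdef, Matrix.reindex_apply, fromBlocks]
  have hMb12 : ∀ (i : Fin m) (j : Fin m), Mb (Fin.castAdd n₂ i) (Fin.natAdd n₁ j) = M12 i j := by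
    intro i j
    simp [hMbdef, Matrix.reindex_apply, fromBlocks]
  have hMb21 : ∀ (i : Fin n₂) (j : Fin n₁), Mb (Fin.natAdd m i) (Fin.castAdd m j) = M21 i j := by
    intro i j
    simp [hMbdef, Matrix.reindex_apply, fromBlocks]
  have hMb22 : ∀ (i : Fin n₂) (j : Fin m), Mb (Fin.natAdd m i) (Fin.natAdd n₁ j) = M22 i j := by
    intro i j
    simp [hMbdef, Matrix.reindex_apply, fromBlocks]
  -- order lemmas
  have e1 : ∀ (N k : ℕ) (a b : Fin N), Fin.castAdd k a = Fin.castAdd k b ↔ a = b :=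
    fun _ _ _ _ => Fin.castAdd_inj
  have e2 : ∀ (N k : ℕ) (a b : Fin N), Fin.castAdd k a < Fin.castAdd k b ↔ a < b :=
    fun _ _ a b => by simp only [Fin.lt_def, Fin.coe_castAdd]
  have e3 : ∀ (N k : ℕ) (a b : Fin N), Fin.natAdd k a = Fin.natAdd k b ↔ a = b :=
    fun _ _ a b => by simp [Fin.ext_iff]
  have e4 : ∀ (N k : ℕ) (a b : Fin N), Fin.natAdd k a < Fin.natAdd k b ↔ a < b :=
    fun _ _ a b => by simp only [Fin.lt_def, Fin.coe_natAdd]; omega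
  have e5 : ∀ (N k : ℕ) (a : Fin N) (b : Fin k), Fin.castAdd k a < Fin.natAdd N b :=
    fun N k a b => by have := a.isLt; simp only [Fin.lt_def, Fin.coe_castAdd, Fin.coe_natAdd]; omega
  have e6 : ∀ (N k : ℕ) (a : Fin N) (b : Fin k), ¬ Fin.natAdd N b < Fin.castAdd k a :=
    fun N k a b => not_lt.mpr (e5 N k a b).le
  have e7 : ∀ (N k : ℕ) (a : Fin N) (b : Fin k), Fin.castAdd k a ≠ Fin.natAdd N b :=
    fun N k a b => (e5 N k a b).ne
  have e8 : ∀ (N k : ℕ) (a : Fin N) (b : Fin k), Fin.natAdd N b ≠ Fin.castAdd k a :=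
    fun N k a b => (e5 N k a b).ne'
  -- master entrywise relation
  have H : ∀ (X1 X2 : Fin (m + n₂)) (Y1 Y2 : Fin (n₁ + m)),
      (if X1 = X2 then q * (Mb X1 Y1 * Mb X1 Y2)
       else if X2 < X1 then Mb X1 Y1 * Mb X2 Y2 + (q - qi) * (Mb X2 Y1 * Mb X1 Y2)
       else Mb X1 Y1 * Mb X2 Y2)
      = (if Y1 = Y2 then Mb X2 Y1 * Mb X1 Y1 * q
         else if Y1 < Y2 then Mb X2 Y2 * Mb X1 Y1 + Mb X2 Y1 * Mb X1 Y2 * (q - qi)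
         else Mb X2 Y2 * Mb X1 Y1) := by
    intro X1 X2 Y1 Y2
    have h := congrFun (congrFun hex (X1, X2)) (Y1, Y2)
    rw [Rmat_mul_apply, mul_Rmat_apply] at h
    simpa [kron, kron'] using h
  -- block hypotheses
  have HB11 : ∀ (x1 x2 : Fin m) (y1 y2 : Fin n₁),
      (if x1 = x2 then q * (M11 x1 y1 * M11 x1 y2)
       else if x2 < x1 then M11 x1 y1 * M11 x2 y2 + (q - qi) * (M11 x2 y1 * M11 x1 y2)
       else M11 x1 y1 * M11 x2 y2)
      = (if y1 = y2 then M11 x2 y1 * M11 x1 y1 * q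
         else if y1 < y2 then M11 x2 y2 * M11 x1 y1 + M11 x2 y1 * M11 x1 y2 * (q - qi)
         else M11 x2 y2 * M11 x1 y1) := by
    intro x1 x2 y1 y2
    have h := H (Fin.castAdd n₂ x1) (Fin.castAdd n₂ x2) (Fin.castAdd m y1) (Fin.castAdd m y2)
    simpa only [e1, e2, hMb11] using h
  have HB12 : ∀ (x1 x2 : Fin m) (y1 y2 : Fin m),
      (if x1 = x2 then q * (M12 x1 y1 * M12 x1 y2)
       else if x2 < x1 then M12 x1 y1 * M12 x2 y2 + (q - qi) * (M12 x2 y1 * M12 x1 y2)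
       else M12 x1 y1 * M12 x2 y2)
      = (if y1 = y2 then M12 x2 y1 * M12 x1 y1 * q
         else if y1 < y2 then M12 x2 y2 * M12 x1 y1 + M12 x2 y1 * M12 x1 y2 * (q - qi)
         else M12 x2 y2 * M12 x1 y1) := by
    intro x1 x2 y1 y2
    have h := H (Fin.castAdd n₂ x1) (Fin.castAdd n₂ x2) (Fin.natAdd n₁ y1) (Fin.natAdd n₁ y2)
    simpa only [e1, e2, e3, e4, hMb12] using h
  have HB21 : ∀ (x1 x2 : Fin n₂) (y1 y2 : Fin n₁),
      (if x1 = x2 then q * (M21 x1 y1 * M21 x1 y2)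
       else if x2 < x1 then M21 x1 y1 * M21 x2 y2 + (q - qi) * (M21 x2 y1 * M21 x1 y2)
       else M21 x1 y1 * M21 x2 y2)
      = (if y1 = y2 then M21 x2 y1 * M21 x1 y1 * q
         else if y1 < y2 then M21 x2 y2 * M21 x1 y1 + M21 x2 y1 * M21 x1 y2 * (q - qi)
         else M21 x2 y2 * M21 x1 y1) := by
    intro x1 x2 y1 y2
    have h := H (Fin.natAdd m x1) (Fin.natAdd m x2) (Fin.castAdd m y1) (Fin.castAdd m y2)
    simpa only [e1, e2, e3, e4, hMb21] using h
  have HB22 : ∀ (x1 x2 : Fin n₂) (y1 y2 : Fin m),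
      (if x1 = x2 then q * (M22 x1 y1 * M22 x1 y2)
       else if x2 < x1 then M22 x1 y1 * M22 x2 y2 + (q - qi) * (M22 x2 y1 * M22 x1 y2)
       else M22 x1 y1 * M22 x2 y2)
      = (if y1 = y2 then M22 x2 y1 * M22 x1 y1 * q
         else if y1 < y2 then M22 x2 y2 * M22 x1 y1 + M22 x2 y1 * M22 x1 y2 * (q - qi)
         else M22 x2 y2 * M22 x1 y1) := by
    intro x1 x2 y1 y2
    have h := H (Fin.natAdd m x1) (Fin.natAdd m x2) (Fin.natAdd n₁ y1) (Fin.natAdd n₁ y2)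
    simpa only [e3, e4, hMb22] using h
  obtain ⟨g1, g2⟩ := block_rel q qi hq hqi M11 HB11
  obtain ⟨g3, g4⟩ := block_rel q qi hq hqi M12 HB12
  obtain ⟨g5, g6⟩ := block_rel q qi hq hqi M21 HB21
  obtain ⟨g7, g8⟩ := block_rel q qi hq hqi M22 HB22
  refine ⟨g1, g2, g3, g4, g5, g6, g7, g8, ?_, ?_, ?_, ?_, ?_, ?_⟩
  · -- (ii)
    ext ⟨x1, x2⟩ ⟨y1, y2⟩
    rw [Rmat_mul_apply]
    have h := H (Fin.castAdd n₂ x1) (Fin.castAdd n₂ x2) (Fin.natAdd n₁ y1) (Fin.castAdd m y2)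
    rw [if_neg (e8 n₁ m y2 y1), if_neg (e6 n₁ m y2 y1)] at h
    simp only [e1, e2, hMb11, hMb12] at h
    simp only [kron, kron']
    exact h.symm
  · -- (iii)
    ext ⟨x1, x2⟩ ⟨y1, y2⟩
    rw [mul_Rmat_apply]
    have h := H (Fin.castAdd n₂ x1) (Fin.natAdd m x2) (Fin.natAdd n₁ y1) (Fin.natAdd n₁ y2)
    rw [if_neg (e7 m n₂ x1 x2), if_neg (e6 m n₂ x1 x2)] at h
    simp only [e3, e4, hMb12, hMb22] at h
    simp only [kron, kron']
    exact h
  · -- (iv)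
    ext ⟨x1, x2⟩ ⟨y1, y2⟩
    rw [mul_Rmat_apply]
    have h := H (Fin.castAdd n₂ x1) (Fin.natAdd m x2) (Fin.castAdd m y1) (Fin.castAdd m y2)
    rw [if_neg (e7 m n₂ x1 x2), if_neg (e6 m n₂ x1 x2)] at h
    simp only [e1, e2, hMb11, hMb21] at h
    simp only [kron, kron']
    exact h
  · -- (v)
    ext ⟨x1, x2⟩ ⟨y1, y2⟩
    rw [Rmat_mul_apply]
    have h := H (Fin.natAdd m x1) (Fin.natAdd m x2) (Fin.natAdd n₁ y1) (Fin.castAdd m y2)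
    rw [if_neg (e8 n₁ m y2 y1), if_neg (e6 n₁ m y2 y1)] at h
    simp only [e3, e4, hMb22, hMb21] at h
    simp only [kron, kron']
    exact h.symm
  · -- (vi)
    ext ⟨x1, x2⟩ ⟨y1, y2⟩
    have h := H (Fin.castAdd n₂ x1) (Fin.natAdd m x2) (Fin.natAdd n₁ y1) (Fin.castAdd m y2)
    rw [if_neg (e7 m n₂ x1 x2), if_neg (e6 m n₂ x1 x2),
      if_neg (e8 n₁ m y2 y1), if_neg (e6 n₁ m y2 y1)] at h
    simp only [hMb12, hMb21] at h
    simp only [kron, kron']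
    exact h
  · -- (vii)
    ext ⟨x1, x2⟩ ⟨y1, y2⟩
    have h := H (Fin.castAdd n₂ x1) (Fin.natAdd m x2) (Fin.castAdd m y1) (Fin.natAdd n₁ y2)
    rw [if_neg (e7 m n₂ x1 x2), if_neg (e6 m n₂ x1 x2),
      if_neg (e7 n₁ m y1 y2), if_pos (e5 n₁ m y1 y2)] at h
    simp only [hMb11, hMb12, hMb21, hMb22] at h
    have hP : (kron' M12 M21 * PmatG A m n₁) ((x1, x2)) ((y1, y2))
        = M21 x2 y1 * M12 x1 y2 := by
      rw [Matrix.mul_apply, Finset.sum_eq_single ((y2, y1) : Fin m × Fin n₁)]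
      · simp [kron', PmatG]
      · rintro ⟨b1, b2⟩ _ hb
        rw [PmatG, if_neg, mul_zero]
        intro hc
        exact hb (Prod.ext hc.1 hc.2)
      · simp
    simp only [Matrix.sub_apply, Matrix.smul_apply, hP, smul_eq_mul, kron, kron']
    linear_combination (norm := noncomm_ring)
      h + hcqi (M21 x2 y1 * M12 x1 y2) - hcq (M21 x2 y1 * M12 x1 y2)
end

section
/- (Zero-level quantum reflection equation.) Let T⁺₀ and T⁻₁ be n₂×n₁ matrices over A satisfying the homogeneous exchange relations R_{n₂}·(X⊠Y) = (X⊠'Y)·R_{n₁} and (R̄_{n₂})ᵀ·(X⊠Y) = (X⊠'Y)·(R̄_{n₁})ᵀ for each of the pairs (X,Y) = (T⁺₀,T⁺₀), (T⁻₁,T⁻₁), (T⁻₁,T⁺₀). Then the n₁×n₁ matrix A₀ := (T⁻₁)ᵀ·T⁺₀ satisfies the quantum reflection equation R·(A₀⊠1)·R^{t1}·(1⊠A₀) = (1⊠A₀)·R^{t1}·(A₀⊠1)·R, where R := R_{n₁} and 1 is the n₁×n₁ identity matrix. -/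
open Matrix

variable {A : Type*} [Ring A]

/-- Partial transposition in the first tensor factor: `Z^{t1}((i,a),(j,b)) = Z((j,a),(i,b))`. -/
def ptrans {n : ℕ} (Z : Matrix (Fin n × Fin n) (Fin n × Fin n) A) :
    Matrix (Fin n × Fin n) (Fin n × Fin n) A := fun x y => Z (y.1, x.2) (x.1, y.2)

/-!
Split `A₀ ⊠ 1 = ((T⁻₁)ᵀ ⊠ 1)(T⁺₀ ⊠ 1)` and `1 ⊠ A₀ = (1 ⊠ (T⁻₁)ᵀ)(1 ⊠ T⁺₀)`. An exchange relation
`R (X ⊠ Y) = (X ⊠' Y) S` between matrices with central entries has a partially transposed form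
`(Xᵀ ⊠ 1) R^{t1} (1 ⊠ Y) = (1 ⊠ Y) S^{t1} (Xᵀ ⊠ 1)` and, because the Kulish–Sklyanin matrix satisfies
`P Rᵀ P = R` for the flip `P`, a transposed form `R (Yᵀ ⊠ Xᵀ) = (Yᵀ ⊠' Xᵀ) R`.
The partially transposed mixed relation turns the left-hand side into
`R ((T⁻₁)ᵀ ⊠ (T⁻₁)ᵀ) R^{t1} (T⁺₀ ⊠ T⁺₀)`. The transposed `T⁻₁T⁻₁` relation, the commutation of `R`
with `R^{t1}` and the `T⁺₀T⁺₀` relation carry `R` to the right end, and the partially transposed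
mixed relation, used once more, gives the right-hand side.
-/

section Kronecker
variable {I J K L : Type*}

theorem kron_one_mul_one_kron [Fintype J] [Fintype K] [DecidableEq J] [DecidableEq K]
    (X : Matrix I J A) (Y : Matrix K L A) :
    kron X (1 : Matrix K K A) * kron (1 : Matrix J J A) Y = kron X Y := by
  ext ⟨i, k⟩ ⟨j, l⟩
  simp [mul_apply, kron, Fintype.sum_prod_type, one_apply]

theorem one_kron_mul_kron_one [Fintype J] [Fintype K] [DecidableEq J] [DecidableEq K]
    (X : Matrix J L A) (Y : Matrix I K A) :
    kron (1 : Matrix J J A) Y * kron X (1 : Matrix K K A) = kron' X Y := by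
  ext ⟨i, k⟩ ⟨j, l⟩
  simp [mul_apply, kron, kron', Fintype.sum_prod_type, one_apply]

theorem kron_one_mul_kron_one [Fintype J] [Fintype K] [DecidableEq K]
    (X : Matrix I J A) (Z : Matrix J L A) :
    kron X (1 : Matrix K K A) * kron Z (1 : Matrix K K A) = kron (X * Z) 1 := by
  ext ⟨i, k⟩ ⟨j, l⟩
  by_cases h : k = l <;> simp [mul_apply, kron, Fintype.sum_prod_type, one_apply, h]

theorem one_kron_mul_one_kron [Fintype J] [Fintype K] [DecidableEq J]
    (Y : Matrix I K A) (W : Matrix K L A) :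
    kron (1 : Matrix J J A) Y * kron (1 : Matrix J J A) W = kron 1 (Y * W) := by
  ext ⟨i, k⟩ ⟨j, l⟩
  by_cases h : i = j <;> simp [mul_apply, kron, Fintype.sum_prod_type, one_apply, h]

end Kronecker

section Exchange
variable {I J K L : Type*}

def CentralEntries (M : Matrix I J A) : Prop := ∀ i j a, Commute (M i j) a

theorem transpose_mul_of_commute [Fintype J] (M : Matrix I J A) (N : Matrix J K A)
    (h : ∀ i j k, Commute (M i j) (N j k)) : (M * N)ᵀ = Nᵀ * Mᵀ := by
  ext k i
  exact Finset.sum_congr rfl fun j _ => (h i j k).eq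

theorem commute_diagonal_of_forall_mul_eq [Fintype I] [DecidableEq I] (d : I → A)
    (M : Matrix I I A) (h : ∀ x y, d x * M x y = M x y * d y) : Commute (diagonal d) M := by
  ext x y
  rw [diagonal_mul, mul_diagonal, h]

/-- `Mᵀ.submatrix Prod.swap Prod.swap` is `P Mᵀ P`, with `P` the flip of the two tensor factors. -/
theorem exchange_transpose_swap [Fintype I] [Fintype J] [Fintype K] [Fintype L]
    {R : Matrix (I × K) (I × K) A} {S : Matrix (J × L) (J × L) A}
    (hR : CentralEntries R) (hS : CentralEntries S) {X : Matrix I J A} {Y : Matrix K L A}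
    (h : R * kron X Y = kron' X Y * S) :
    Sᵀ.submatrix Prod.swap Prod.swap * kron Yᵀ Xᵀ =
      kron' Yᵀ Xᵀ * Rᵀ.submatrix Prod.swap Prod.swap := by
  have h' := congrArg (fun M => Mᵀ.submatrix Prod.swap Prod.swap) h
  rw [transpose_mul_of_commute _ _ fun _ _ _ => hR _ _ _,
    transpose_mul_of_commute _ _ fun _ _ _ => (hS _ _ _).symm,
    submatrix_mul _ _ _ _ _ Prod.swap_bijective, submatrix_mul _ _ _ _ _ Prod.swap_bijective] at h'
  exact h'.symm

theorem exchange_ptrans {m n : ℕ} {R : Matrix (Fin m × Fin m) (Fin m × Fin m) A}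
    {S : Matrix (Fin n × Fin n) (Fin n × Fin n) A}
    (hR : CentralEntries R) (hS : CentralEntries S) {X Y : Matrix (Fin m) (Fin n) A}
    (h : R * kron X Y = kron' X Y * S) :
    kron Xᵀ (1 : Matrix (Fin m) (Fin m) A) * ptrans R * kron (1 : Matrix (Fin m) (Fin m) A) Y =
      kron (1 : Matrix (Fin n) (Fin n) A) Y * ptrans S * kron Xᵀ (1 : Matrix (Fin n) (Fin n) A) := by
  ext ⟨i, a⟩ ⟨j, b⟩
  have hij := congrFun (congrFun h (j, a)) (i, b)
  simp only [mul_apply, kron, Fintype.sum_prod_type, kron', transpose_apply, one_apply, mul_ite,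
    mul_one, mul_zero, ptrans, ite_mul, zero_mul, Finset.sum_ite_eq, Finset.mem_univ, ↓reduceIte,
    one_mul, Finset.sum_ite_irrel, Finset.sum_const_zero, Finset.sum_ite_eq'] at hij ⊢
  convert hij using 1 <;> simp only [Finset.sum_mul]
  · rw [Finset.sum_comm]
    refine Finset.sum_congr rfl fun k _ => Finset.sum_congr rfl fun l _ => ?_
    rw [← (hR _ _ _).eq, mul_assoc]
  · refine Finset.sum_congr rfl fun k _ => Finset.sum_congr rfl fun l _ => ?_
    rw [mul_assoc, (hS _ _ _).eq, ← mul_assoc]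

end Exchange

section KulishSklyanin
variable {q qi : A} {n : ℕ}

theorem centralEntries_Rmat (hq : ∀ a : A, Commute q a) (hqi : ∀ a : A, Commute qi a) :
    CentralEntries (Rmat A q qi n) := by
  intro x y a
  unfold Rmat
  split_ifs
  exacts [hq a, .one_left a, (hq a).sub_left (hqi a), .zero_left a]

theorem transpose_submatrix_swap_Rmat :
    (Rmat A q qi n)ᵀ.submatrix Prod.swap Prod.swap = Rmat A q qi n := by
  ext ⟨a, b⟩ ⟨c, d⟩
  simp only [submatrix_apply, transpose_apply, Prod.swap_prod_mk, Rmat]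
  split_ifs <;> first | rfl | (exfalso; omega)

theorem Rmat_exchange_transpose (hq : ∀ a : A, Commute q a) (hqi : ∀ a : A, Commute qi a)
    {n₁ n₂ : ℕ} {X Y : Matrix (Fin n₂) (Fin n₁) A}
    (h : Rmat A q qi n₂ * kron X Y = kron' X Y * Rmat A q qi n₁) :
    Rmat A q qi n₁ * kron Yᵀ Xᵀ = kron' Yᵀ Xᵀ * Rmat A q qi n₂ := by
  simpa only [transpose_submatrix_swap_Rmat] using
    exchange_transpose_swap (centralEntries_Rmat hq hqi) (centralEntries_Rmat hq hqi) h

theorem Rmat_exchange_ptrans (hq : ∀ a : A, Commute q a) (hqi : ∀ a : A, Commute qi a)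
    {n₁ n₂ : ℕ} {X Y : Matrix (Fin n₂) (Fin n₁) A}
    (h : Rmat A q qi n₂ * kron X Y = kron' X Y * Rmat A q qi n₁) :
    kron Xᵀ (1 : Matrix (Fin n₂) (Fin n₂) A) * ptrans (Rmat A q qi n₂) *
        kron (1 : Matrix (Fin n₂) (Fin n₂) A) Y =
      kron (1 : Matrix (Fin n₁) (Fin n₁) A) Y * ptrans (Rmat A q qi n₁) *
        kron Xᵀ (1 : Matrix (Fin n₁) (Fin n₁) A) :=
  exchange_ptrans (centralEntries_Rmat hq hqi) (centralEntries_Rmat hq hqi) h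

theorem Rmat_eq_diagonal_add :
    Rmat A q qi n = diagonal (fun x => if x.1 = x.2 then q else 1) +
      of (fun x y => if y = x.swap ∧ x.2 < x.1 then q - qi else 0) := by
  ext ⟨a, b⟩ ⟨c, d⟩
  simp only [Rmat, Matrix.add_apply, diagonal_apply, of_apply, Prod.swap_prod_mk, Prod.mk.injEq]
  split_ifs <;> first | (exfalso; omega) | simp

theorem ptrans_Rmat_eq_diagonal_add :
    ptrans (Rmat A q qi n) = diagonal (fun x => if x.1 = x.2 then q else 1) +
      of (fun x y => if x.1 = x.2 ∧ y.1 = y.2 ∧ x.1 < y.1 then q - qi else 0) := by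
  ext ⟨a, b⟩ ⟨c, d⟩
  simp only [ptrans, Rmat, Matrix.add_apply, diagonal_apply, of_apply, Prod.mk.injEq]
  split_ifs <;> first | (exfalso; omega) | simp

theorem commute_Rmat_ptrans (hq : ∀ a : A, Commute q a) :
    Commute (Rmat A q qi n) (ptrans (Rmat A q qi n)) := by
  rw [ptrans_Rmat_eq_diagonal_add, Rmat_eq_diagonal_add]
  set d : Fin n × Fin n → A := fun x => if x.1 = x.2 then q else 1
  set N : Matrix (Fin n × Fin n) (Fin n × Fin n) A :=
    of fun x y => if y = x.swap ∧ x.2 < x.1 then q - qi else 0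
  set M : Matrix (Fin n × Fin n) (Fin n × Fin n) A :=
    of fun x y => if x.1 = x.2 ∧ y.1 = y.2 ∧ x.1 < y.1 then q - qi else 0
  -- `N` lives on off-diagonal pairs, where `d = 1`; `M` on diagonal pairs, where `d = q`.
  have hdN : Commute (diagonal d) N := commute_diagonal_of_forall_mul_eq d N fun x y => by
    obtain ⟨a, b⟩ := x
    obtain ⟨c, e⟩ := y
    simp only [d, N, of_apply, Prod.swap_prod_mk, Prod.mk.injEq]
    split_ifs <;> first | (exfalso; omega) | simp
  have hdM : Commute (diagonal d) M := commute_diagonal_of_forall_mul_eq d M fun x y => by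
    simp only [d, M, of_apply]
    split_ifs <;> first | (exfalso; omega) | simp [(hq _).eq]
  have hNM : N * M = 0 ∧ M * N = 0 := by
    constructor <;> ext x y <;> refine Finset.sum_eq_zero fun ⟨a, b⟩ _ => ?_ <;>
      simp only [N, M, of_apply, Prod.ext_iff, Prod.fst_swap, Prod.snd_swap] <;>
      split_ifs <;> first | (exfalso; omega) | simp
  exact ((Commute.refl _).add_right hdM).add_left (hdN.symm.add_right (hNM.1.trans hNM.2.symm))

end KulishSklyanin

theorem stmt8_general (q qi : A) (hq : ∀ a : A, Commute q a) (hqi : ∀ a : A, Commute qi a)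
    (n₁ n₂ : ℕ)
    (Tp0 Tm1 : Matrix (Fin n₂) (Fin n₁) A)
    (h1 : Rmat A q qi n₂ * kron Tp0 Tp0 = kron' Tp0 Tp0 * Rmat A q qi n₁)
    (h2 : Rmat A q qi n₂ * kron Tm1 Tm1 = kron' Tm1 Tm1 * Rmat A q qi n₁)
    (h3 : Rmat A q qi n₂ * kron Tm1 Tp0 = kron' Tm1 Tp0 * Rmat A q qi n₁) :
    Rmat A q qi n₁ * kron (Tm1ᵀ * Tp0) (1 : Matrix (Fin n₁) (Fin n₁) A) *
        ptrans (Rmat A q qi n₁) * kron (1 : Matrix (Fin n₁) (Fin n₁) A) (Tm1ᵀ * Tp0) =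
      kron (1 : Matrix (Fin n₁) (Fin n₁) A) (Tm1ᵀ * Tp0) * ptrans (Rmat A q qi n₁) *
        kron (Tm1ᵀ * Tp0) (1 : Matrix (Fin n₁) (Fin n₁) A) * Rmat A q qi n₁ := by
  set R₁ := Rmat A q qi n₁
  set R₂ := Rmat A q qi n₂
  set E₁ : Matrix (Fin n₁) (Fin n₁) A := 1 with hE₁
  set E₂ : Matrix (Fin n₂) (Fin n₂) A := 1 with hE₂
  have hcomm : Commute R₂ (ptrans R₂) := commute_Rmat_ptrans hq
  have hTmTm : R₁ * kron Tm1ᵀ Tm1ᵀ = kron' Tm1ᵀ Tm1ᵀ * R₂ := Rmat_exchange_transpose hq hqi h2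
  have hTpTm_t1 : kron Tp0 E₁ * ptrans R₁ * kron E₁ Tm1ᵀ =
      kron E₂ Tm1ᵀ * ptrans R₂ * kron Tp0 E₂ := by
    simpa only [transpose_transpose] using
      Rmat_exchange_ptrans hq hqi (Rmat_exchange_transpose hq hqi h3)
  have hTmTp_t1 : kron Tm1ᵀ E₂ * ptrans R₂ * kron E₂ Tp0 =
      kron E₁ Tp0 * ptrans R₁ * kron Tm1ᵀ E₁ := Rmat_exchange_ptrans hq hqi h3
  rw [← kron_one_mul_kron_one, ← one_kron_mul_one_kron]
  calc R₁ * (kron Tm1ᵀ E₁ * kron Tp0 E₁) * ptrans R₁ * (kron E₁ Tm1ᵀ * kron E₁ Tp0)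
      = R₁ * kron Tm1ᵀ E₁ * (kron Tp0 E₁ * ptrans R₁ * kron E₁ Tm1ᵀ) * kron E₁ Tp0 := by
        simp only [Matrix.mul_assoc]
    _ = R₁ * (kron Tm1ᵀ E₁ * kron E₂ Tm1ᵀ) * ptrans R₂ * (kron Tp0 E₂ * kron E₁ Tp0) := by
        rw [hTpTm_t1]; simp only [Matrix.mul_assoc]
    _ = kron' Tm1ᵀ Tm1ᵀ * (R₂ * ptrans R₂) * kron Tp0 Tp0 := by
        rw [kron_one_mul_one_kron, kron_one_mul_one_kron, hTmTm, Matrix.mul_assoc _ R₂]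
    _ = kron' Tm1ᵀ Tm1ᵀ * ptrans R₂ * kron' Tp0 Tp0 * R₁ := by
        rw [hcomm.eq]; simp only [Matrix.mul_assoc, h1]
    _ = kron E₁ Tm1ᵀ * (kron Tm1ᵀ E₂ * ptrans R₂ * kron E₂ Tp0) * kron Tp0 E₁ * R₁ := by
        rw [← one_kron_mul_kron_one, ← one_kron_mul_kron_one]
        simp only [Matrix.mul_assoc, ← hE₁, ← hE₂]
    _ = kron E₁ Tm1ᵀ * kron E₁ Tp0 * ptrans R₁ * (kron Tm1ᵀ E₁ * kron Tp0 E₁) * R₁ := by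
        rw [hTmTp_t1]; simp only [Matrix.mul_assoc]

/-- the zero-level combination `A₀ = (T⁻₁)ᵀ·T⁺₀` satisfies the quantum
reflection equation. -/
theorem stmt8 (q qi : A) (hq : ∀ a : A, Commute q a) (hqi : ∀ a : A, Commute qi a)
    (hqinv : q * qi = 1) (hqinv' : qi * q = 1)
    (n₁ n₂ : ℕ) (hn₁ : 1 ≤ n₁) (hn₂ : 1 ≤ n₂)
    (Tp0 Tm1 : Matrix (Fin n₂) (Fin n₁) A)
    (h1 : Rmat A q qi n₂ * kron Tp0 Tp0 = kron' Tp0 Tp0 * Rmat A q qi n₁)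
    (h1' : (Rmat A qi q n₂)ᵀ * kron Tp0 Tp0 = kron' Tp0 Tp0 * (Rmat A qi q n₁)ᵀ)
    (h2 : Rmat A q qi n₂ * kron Tm1 Tm1 = kron' Tm1 Tm1 * Rmat A q qi n₁)
    (h2' : (Rmat A qi q n₂)ᵀ * kron Tm1 Tm1 = kron' Tm1 Tm1 * (Rmat A qi q n₁)ᵀ)
    (h3 : Rmat A q qi n₂ * kron Tm1 Tp0 = kron' Tm1 Tp0 * Rmat A q qi n₁)
    (h3' : (Rmat A qi q n₂)ᵀ * kron Tm1 Tp0 = kron' Tm1 Tp0 * (Rmat A qi q n₁)ᵀ) :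
    Rmat A q qi n₁ * kron (Tm1ᵀ * Tp0) (1 : Matrix (Fin n₁) (Fin n₁) A) *
        ptrans (Rmat A q qi n₁) * kron (1 : Matrix (Fin n₁) (Fin n₁) A) (Tm1ᵀ * Tp0) =
      kron (1 : Matrix (Fin n₁) (Fin n₁) A) (Tm1ᵀ * Tp0) * ptrans (Rmat A q qi n₁) *
        kron (Tm1ᵀ * Tp0) (1 : Matrix (Fin n₁) (Fin n₁) A) * Rmat A q qi n₁ :=
  stmt8_general q qi hq hqi n₁ n₂ Tp0 Tm1 h1 h2 h3
end

section
/- (Recursion lemma for powers of an exchange-commuting matrix.) Let B be an m×m matrix over A satisfying R·(B⊠B) = (B⊠'B)·R with R := R_m. Write ¹B := B⊠1, ²B := 1⊠B (1 the m×m identity), P := P_m, and for k, p ≥ 0 set F(k,p) := R·(¹B·R)^k·(Rᵀ·²B)^p + (q−q⁻¹)·P·Σ_{j=1}^{p}(¹B·R)^{k+j}·(Rᵀ·²B)^{p−j} − (²B·Rᵀ)^p·(R·¹B)^k·R − (q−q⁻¹)·Σ_{j=1}^{p}(²B·Rᵀ)^{p−j}·(R·¹B)^{k+j}·P. Then for all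 k ≥ p ≥ 1: F(k,p) = (²B·¹B)·F(k−1, p−1). -/
open Matrix

variable {A : Type*} [Ring A]

/-- The bracket expression `F(k,p)` built from `¹B = B⊠1`, `²B = 1⊠B`, `R = R_m`, `P = P_m`:
`F(k,p) = R·(¹B·R)^k·(Rᵀ·²B)^p + (q−q⁻¹)·P·Σ_{j=1}^{p}(¹B·R)^{k+j}·(Rᵀ·²B)^{p−j}
          − (²B·Rᵀ)^p·(R·¹B)^k·R − (q−q⁻¹)·Σ_{j=1}^{p}(²B·Rᵀ)^{p−j}·(R·¹B)^{k+j}·P`. -/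
def Fexpr (q qi : A) (m : ℕ) (B : Matrix (Fin m) (Fin m) A) (k p : ℕ) :
    Matrix (Fin m × Fin m) (Fin m × Fin m) A :=
  Rmat A q qi m * (kron B (1 : Matrix (Fin m) (Fin m) A) * Rmat A q qi m) ^ k *
      ((Rmat A q qi m)ᵀ * kron (1 : Matrix (Fin m) (Fin m) A) B) ^ p +
    (q - qi) • (Pmat A m * ∑ j ∈ Finset.Icc 1 p,
      (kron B (1 : Matrix (Fin m) (Fin m) A) * Rmat A q qi m) ^ (k + j) *
        ((Rmat A q qi m)ᵀ * kron (1 : Matrix (Fin m) (Fin m) A) B) ^ (p - j)) -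
    (kron (1 : Matrix (Fin m) (Fin m) A) B * (Rmat A q qi m)ᵀ) ^ p *
      (Rmat A q qi m * kron B (1 : Matrix (Fin m) (Fin m) A)) ^ k * Rmat A q qi m -
    (q - qi) • (∑ j ∈ Finset.Icc 1 p,
      (kron (1 : Matrix (Fin m) (Fin m) A) B * (Rmat A q qi m)ᵀ) ^ (p - j) *
        (Rmat A q qi m * kron B (1 : Matrix (Fin m) (Fin m) A)) ^ (k + j) * Pmat A m)

namespace Stmt11Aux

open scoped Classical

noncomputable def Ind {m : ℕ} (v : A) (c : Fin m × Fin m → Prop) (f : Fin m × Fin m → Fin m × Fin m) :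
    Matrix (Fin m × Fin m) (Fin m × Fin m) A :=
  fun x y => if c x ∧ y = f x then v else 0

variable {m : ℕ}

lemma ind_mul (v : A) (c : Fin m × Fin m → Prop) (f) (M : Matrix (Fin m × Fin m) (Fin m × Fin m) A) :
    Ind v c f * M = fun x y => if c x then v * M (f x) y else 0 := by
  classical
  funext x y
  rw [Matrix.mul_apply]
  by_cases h : c x
  · simp [Ind, h]
  · simp [Ind, h]

lemma ind_mul_ind (v w : A) (c d : Fin m × Fin m → Prop) (f g) :
    (Ind v c f : Matrix _ _ A) * Ind w d g
      = Ind (v * w) (fun x => c x ∧ d (f x)) (fun x => g (f x)) := by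
  classical
  rw [ind_mul]
  funext x y
  by_cases h1 : c x <;> by_cases h2 : d (f x) <;> by_cases h3 : y = g (f x) <;>
    simp [Ind, h1, h2, h3]

lemma ind_false (v : A) (c : Fin m × Fin m → Prop) (f) (h : ∀ x, ¬ c x) :
    (Ind v c f : Matrix _ _ A) = 0 := by
  funext x y
  simp [Ind, h x]

lemma ind_congr (v : A) (c d : Fin m × Fin m → Prop) (f g)
    (h : ∀ x, c x ↔ d x) (hf : ∀ x, c x → f x = g x) :
    (Ind v c f : Matrix _ _ A) = Ind v d g := by
  funext x y
  simp only [Ind]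
  by_cases h1 : c x ∧ y = f x <;> by_cases h2 : d x ∧ y = g x
  · rw [if_pos h1, if_pos h2]
  · exact absurd ⟨(h x).mp h1.1, h1.2.trans (hf x h1.1)⟩ h2
  · exact absurd ⟨(h x).mpr h2.1, h2.2.trans (hf x ((h x).mpr h2.1)).symm⟩ h1
  · rw [if_neg h1, if_neg h2]

lemma ind_smul (a v : A) (c : Fin m × Fin m → Prop) (f) :
    a • (Ind v c f : Matrix _ _ A) = Ind (a * v) c f := by
  classical
  funext x y
  by_cases h : c x ∧ y = f x <;> simp [Ind, h]

lemma ind_add (v w : A) (c : Fin m × Fin m → Prop) (f) :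
    (Ind v c f : Matrix _ _ A) + Ind w c f = Ind (v + w) c f := by
  classical
  funext x y
  by_cases h : c x ∧ y = f x <;> simp [Ind, h]

end Stmt11Aux

namespace Stmt11Aux
variable {A : Type*} [Ring A] {m : ℕ}
open scoped Classical

noncomputable def Em (a : A) : Matrix (Fin m × Fin m) (Fin m × Fin m) A :=
  Ind a (fun x => x.1 = x.2) id
noncomputable def Qg (a : A) : Matrix (Fin m × Fin m) (Fin m × Fin m) A :=
  Ind a (fun x => x.2 < x.1) (fun x => (x.2, x.1))
noncomputable def Ql (a : A) : Matrix (Fin m × Fin m) (Fin m × Fin m) A :=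
  Ind a (fun x => x.1 < x.2) (fun x => (x.2, x.1))
noncomputable def Dg (a : A) : Matrix (Fin m × Fin m) (Fin m × Fin m) A :=
  Ind a (fun x => x.2 < x.1) id
noncomputable def Dl (a : A) : Matrix (Fin m × Fin m) (Fin m × Fin m) A :=
  Ind a (fun x => x.1 < x.2) id

lemma Em_Em (a b : A) : (Em a : Matrix (Fin m × Fin m) (Fin m × Fin m) A) * Em b = Em (a * b) := by
  simp only [Em]; rw [ind_mul_ind]
  exact ind_congr _ _ _ _ _ (fun x => by simp) (fun x _ => rfl)

lemma Em_Qg (a b : A) : (Em a : Matrix (Fin m × Fin m) (Fin m × Fin m) A) * Qg b = 0 := by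
  simp only [Em, Qg]; rw [ind_mul_ind]
  exact ind_false _ _ _ (fun x => by simp only [id_eq]; omega)

lemma Em_Ql (a b : A) : (Em a : Matrix (Fin m × Fin m) (Fin m × Fin m) A) * Ql b = 0 := by
  simp only [Em, Ql]; rw [ind_mul_ind]
  exact ind_false _ _ _ (fun x => by simp only [id_eq]; omega)

lemma Qg_Em (a b : A) : (Qg a : Matrix (Fin m × Fin m) (Fin m × Fin m) A) * Em b = 0 := by
  simp only [Em, Qg]; rw [ind_mul_ind]
  exact ind_false _ _ _ (fun x => by simp only [id_eq]; omega)

lemma Ql_Em (a b : A) : (Ql a : Matrix (Fin m × Fin m) (Fin m × Fin m) A) * Em b = 0 := by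
  simp only [Em, Ql]; rw [ind_mul_ind]
  exact ind_false _ _ _ (fun x => by simp only [id_eq]; omega)

lemma Qg_Qg (a b : A) : (Qg a : Matrix (Fin m × Fin m) (Fin m × Fin m) A) * Qg b = 0 := by
  simp only [Qg]; rw [ind_mul_ind]
  exact ind_false _ _ _ (fun x => by simp only [id_eq]; omega)

lemma Ql_Ql (a b : A) : (Ql a : Matrix (Fin m × Fin m) (Fin m × Fin m) A) * Ql b = 0 := by
  simp only [Ql]; rw [ind_mul_ind]
  exact ind_false _ _ _ (fun x => by simp only [id_eq]; omega)

lemma Qg_Ql (a b : A) : (Qg a : Matrix (Fin m × Fin m) (Fin m × Fin m) A) * Ql b = Dg (a * b) := by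
  simp only [Qg, Ql, Dg]; rw [ind_mul_ind]
  exact ind_congr _ _ _ _ _ (fun x => by simp) (fun x _ => by simp)

lemma Ql_Qg (a b : A) : (Ql a : Matrix (Fin m × Fin m) (Fin m × Fin m) A) * Qg b = Dl (a * b) := by
  simp only [Qg, Ql, Dl]; rw [ind_mul_ind]
  exact ind_congr _ _ _ _ _ (fun x => by simp) (fun x _ => by simp)

lemma Em_smul (a b : A) : a • (Em b : Matrix (Fin m × Fin m) (Fin m × Fin m) A) = Em (a * b) := ind_smul _ _ _ _
lemma Qg_smul (a b : A) : a • (Qg b : Matrix (Fin m × Fin m) (Fin m × Fin m) A) = Qg (a * b) := ind_smul _ _ _ _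
lemma Ql_smul (a b : A) : a • (Ql b : Matrix (Fin m × Fin m) (Fin m × Fin m) A) = Ql (a * b) := ind_smul _ _ _ _
lemma Dg_smul (a b : A) : a • (Dg b : Matrix (Fin m × Fin m) (Fin m × Fin m) A) = Dg (a * b) := ind_smul _ _ _ _
lemma Dl_smul (a b : A) : a • (Dl b : Matrix (Fin m × Fin m) (Fin m × Fin m) A) = Dl (a * b) := ind_smul _ _ _ _

lemma one_decomp : (1 : Matrix (Fin m × Fin m) (Fin m × Fin m) A) = Em 1 + Dl 1 + Dg 1 := by
  funext x y
  obtain ⟨x1, x2⟩ := x; obtain ⟨y1, y2⟩ := y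
  simp only [Em, Dl, Dg, Ind, Matrix.add_apply, Matrix.one_apply, id_eq]
  split_ifs
  all_goals try (exfalso; simp only [Prod.mk.injEq] at *; omega)
  all_goals abel

lemma R_decomp (q qi : A) : Rmat A q qi m = 1 + Em (q - 1) + Qg (q - qi) := by
  funext x y
  obtain ⟨x1, x2⟩ := x; obtain ⟨y1, y2⟩ := y
  simp only [Rmat, Em, Qg, Ind, Matrix.add_apply, Matrix.one_apply, id_eq]
  split_ifs
  all_goals try (exfalso; simp only [Prod.mk.injEq] at *; omega)
  all_goals abel

lemma Rt_decomp (q qi : A) : (Rmat A q qi m)ᵀ = 1 + Em (q - 1) + Ql (q - qi) := by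
  funext x y
  obtain ⟨x1, x2⟩ := x; obtain ⟨y1, y2⟩ := y
  simp only [Rmat, Em, Ql, Ind, Matrix.add_apply, Matrix.one_apply, Matrix.transpose_apply, id_eq]
  split_ifs
  all_goals try (exfalso; simp only [Prod.mk.injEq] at *; omega)
  all_goals abel

lemma P_decomp : Pmat A m = Em 1 + Qg 1 + Ql 1 := by
  funext x y
  obtain ⟨x1, x2⟩ := x; obtain ⟨y1, y2⟩ := y
  simp only [Pmat, PmatG, Em, Qg, Ql, Ind, Matrix.add_apply, id_eq]
  split_ifs
  all_goals try (exfalso; simp only [Prod.mk.injEq] at *; omega)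
  all_goals abel

end Stmt11Aux

namespace Stmt11Aux
variable {A : Type*} [Ring A] {m : ℕ}

lemma Em_add (a b : A) : (Em a : Matrix (Fin m × Fin m) (Fin m × Fin m) A) + Em b = Em (a + b) :=
  ind_add _ _ _ _

lemma PR_exp (q qi : A) : Pmat A m * Rmat A q qi m
    = Em 1 + Em (q - 1) + Qg 1 + Ql 1 + Dl (q - qi) := by
  rw [P_decomp, R_decomp]
  simp only [add_mul, mul_add, one_mul, mul_one, Em_Em, Em_Qg, Em_Ql, Qg_Em, Qg_Qg, Qg_Ql,
    Ql_Em, Ql_Qg, Ql_Ql, add_zero, zero_add]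
  abel

lemma RP_exp (q qi : A) : Rmat A q qi m * Pmat A m
    = Em 1 + Em (q - 1) + Qg 1 + Ql 1 + Dg (q - qi) := by
  rw [P_decomp, R_decomp]
  simp only [add_mul, mul_add, one_mul, mul_one, Em_Em, Em_Qg, Em_Ql, Qg_Em, Qg_Qg, Qg_Ql,
    Ql_Em, Ql_Qg, Ql_Ql, add_zero, zero_add]
  abel

lemma hPP : Pmat A m * Pmat A m = 1 := by
  rw [P_decomp]
  simp only [add_mul, mul_add, one_mul, mul_one, Em_Em, Em_Qg, Em_Ql, Qg_Em, Qg_Qg, Qg_Ql,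
    Ql_Em, Ql_Qg, Ql_Ql, add_zero, zero_add]
  rw [one_decomp]
  try abel

lemma hPR (q qi : A) : Pmat A m * Rmat A q qi m = (Rmat A q qi m)ᵀ * Pmat A m := by
  rw [PR_exp, Rt_decomp, P_decomp]
  simp only [add_mul, mul_add, one_mul, mul_one, Em_Em, Em_Qg, Em_Ql, Qg_Em, Qg_Qg, Qg_Ql,
    Ql_Em, Ql_Qg, Ql_Ql, add_zero, zero_add]
  abel

lemma hRP (q qi : A) : Rmat A q qi m * Pmat A m = Pmat A m * (Rmat A q qi m)ᵀ := by
  rw [RP_exp, Rt_decomp, P_decomp]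
  simp only [add_mul, mul_add, one_mul, mul_one, Em_Em, Em_Qg, Em_Ql, Qg_Em, Qg_Qg, Qg_Ql,
    Ql_Em, Ql_Qg, Ql_Ql, add_zero, zero_add]
  abel

lemma coeff_key (q qi : A) (hqinv' : qi * q = 1) :
    (q - 1) + ((q - 1) + (q - 1) * (q - 1)) = (q - qi) + (q - qi) * (q - 1) := by
  have h2 : (q - qi) + (q - qi) * (q - 1) = q * q - qi * q := by noncomm_ring
  have h3 : (q - 1) + ((q - 1) + (q - 1) * (q - 1)) = q * q - 1 := by noncomm_ring
  rw [h2, h3, hqinv']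

lemma hRtR (q qi : A) (hqinv' : qi * q = 1) :
    (Rmat A q qi m)ᵀ * Rmat A q qi m = 1 + (q - qi) • (Pmat A m * Rmat A q qi m) := by
  rw [PR_exp]
  simp only [smul_add, Em_smul, Qg_smul, Ql_smul, Dl_smul, mul_one]
  rw [Rt_decomp, R_decomp]
  simp only [add_mul, mul_add, one_mul, mul_one, Em_Em, Em_Qg, Em_Ql, Qg_Em, Qg_Qg, Qg_Ql,
    Ql_Em, Ql_Qg, Ql_Ql, add_zero, zero_add]
  calc 1 + Em (q - 1) + Ql (q - qi) + (Em (q - 1) + Em ((q - 1) * (q - 1))) +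
        (Qg (q - qi) + Dl ((q - qi) * (q - qi)))
      = (1 : Matrix (Fin m × Fin m) (Fin m × Fin m) A) +
        (Em (q - 1) + (Em (q - 1) + Em ((q - 1) * (q - 1)))) + Qg (q - qi) + Ql (q - qi) +
        Dl ((q - qi) * (q - qi)) := by abel
    _ = 1 + Em ((q - 1) + ((q - 1) + (q - 1) * (q - 1))) + Qg (q - qi) + Ql (q - qi) +
        Dl ((q - qi) * (q - qi)) := by rw [Em_add, Em_add]
    _ = 1 + Em ((q - qi) + (q - qi) * (q - 1)) + Qg (q - qi) + Ql (q - qi) +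
        Dl ((q - qi) * (q - qi)) := by rw [coeff_key q qi hqinv']
    _ = 1 + (Em (q - qi) + Em ((q - qi) * (q - 1)) + Qg (q - qi) + Ql (q - qi) +
        Dl ((q - qi) * (q - qi))) := by rw [← Em_add]; abel

lemma hRRt (q qi : A) (hqinv' : qi * q = 1) :
    Rmat A q qi m * (Rmat A q qi m)ᵀ = 1 + (q - qi) • (Rmat A q qi m * Pmat A m) := by
  rw [RP_exp]
  simp only [smul_add, Em_smul, Qg_smul, Ql_smul, Dg_smul, mul_one]
  rw [Rt_decomp, R_decomp]
  simp only [add_mul, mul_add, one_mul, mul_one, Em_Em, Em_Qg, Em_Ql, Qg_Em, Qg_Qg, Qg_Ql,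
    Ql_Em, Ql_Qg, Ql_Ql, add_zero, zero_add]
  calc 1 + Em (q - 1) + Qg (q - qi) + (Em (q - 1) + Em ((q - 1) * (q - 1))) +
        (Ql (q - qi) + Dg ((q - qi) * (q - qi)))
      = (1 : Matrix (Fin m × Fin m) (Fin m × Fin m) A) +
        (Em (q - 1) + (Em (q - 1) + Em ((q - 1) * (q - 1)))) + Qg (q - qi) + Ql (q - qi) +
        Dg ((q - qi) * (q - qi)) := by abel
    _ = 1 + Em ((q - 1) + ((q - 1) + (q - 1) * (q - 1))) + Qg (q - qi) + Ql (q - qi) +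
        Dg ((q - qi) * (q - qi)) := by rw [Em_add, Em_add]
    _ = 1 + Em ((q - qi) + (q - qi) * (q - 1)) + Qg (q - qi) + Ql (q - qi) +
        Dg ((q - qi) * (q - qi)) := by rw [coeff_key q qi hqinv']
    _ = 1 + (Em (q - qi) + Em ((q - qi) * (q - 1)) + Qg (q - qi) + Ql (q - qi) +
        Dg ((q - qi) * (q - qi))) := by rw [← Em_add]; abel

end Stmt11Aux

namespace Stmt11Aux
variable {A : Type*} [Ring A] {m : ℕ}

lemma Pmul_apply (M : Matrix (Fin m × Fin m) (Fin m × Fin m) A) (x y : Fin m × Fin m) :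
    (Pmat A m * M) x y = M (x.2, x.1) y := by
  rw [Matrix.mul_apply]
  have key : ∀ z : Fin m × Fin m, (x.1 = z.2 ∧ x.2 = z.1) ↔ z = (x.2, x.1) := by
    rintro ⟨z1, z2⟩
    simp only [Prod.mk.injEq]
    try omega
  simp [Pmat, PmatG, key, ite_mul, one_mul, zero_mul]

lemma mulP_apply (M : Matrix (Fin m × Fin m) (Fin m × Fin m) A) (x y : Fin m × Fin m) :
    (M * Pmat A m) x y = M x (y.2, y.1) := by
  rw [Matrix.mul_apply]
  have key : ∀ z : Fin m × Fin m, (z.1 = y.2 ∧ z.2 = y.1) ↔ z = (y.2, y.1) := by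
    rintro ⟨z1, z2⟩
    simp only [Prod.mk.injEq]
    try omega
  simp [Pmat, PmatG, key, mul_ite, mul_one, mul_zero]

lemma hPB1 (B : Matrix (Fin m) (Fin m) A) :
    Pmat A m * kron B (1 : Matrix (Fin m) (Fin m) A)
      = kron (1 : Matrix (Fin m) (Fin m) A) B * Pmat A m := by
  funext x y
  rw [Pmul_apply, mulP_apply]
  simp [kron, Matrix.one_apply, mul_ite, ite_mul, mul_one, one_mul, mul_zero, zero_mul]

lemma hPB2 (B : Matrix (Fin m) (Fin m) A) :
    Pmat A m * kron (1 : Matrix (Fin m) (Fin m) A) B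
      = kron B (1 : Matrix (Fin m) (Fin m) A) * Pmat A m := by
  funext x y
  rw [Pmul_apply, mulP_apply]
  simp [kron, Matrix.one_apply, mul_ite, ite_mul, mul_one, one_mul, mul_zero, zero_mul]

lemma hB1B2 (B : Matrix (Fin m) (Fin m) A) :
    kron B (1 : Matrix (Fin m) (Fin m) A) * kron (1 : Matrix (Fin m) (Fin m) A) B
      = kron B B := by
  funext x y
  rw [Matrix.mul_apply, Fintype.sum_prod_type]
  simp [kron, Matrix.one_apply, mul_ite, ite_mul, mul_one, one_mul, mul_zero, zero_mul,
    Finset.sum_ite_eq, Finset.sum_ite_eq']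

lemma hB2B1 (B : Matrix (Fin m) (Fin m) A) :
    kron (1 : Matrix (Fin m) (Fin m) A) B * kron B (1 : Matrix (Fin m) (Fin m) A)
      = kron' B B := by
  funext x y
  rw [Matrix.mul_apply, Fintype.sum_prod_type]
  simp [kron, kron', Matrix.one_apply, mul_ite, ite_mul, mul_one, one_mul, mul_zero, zero_mul,
    Finset.sum_ite_eq, Finset.sum_ite_eq']

lemma smul_mul_mat (l : A) (M N : Matrix (Fin m × Fin m) (Fin m × Fin m) A) :
    (l • M) * N = l • (M * N) := by
  funext x y
  simp only [Matrix.mul_apply, Matrix.smul_apply, smul_eq_mul, Finset.mul_sum, mul_assoc]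

lemma mul_smul_mat (l : A) (hl : ∀ a : A, Commute l a)
    (M N : Matrix (Fin m × Fin m) (Fin m × Fin m) A) :
    M * (l • N) = l • (M * N) := by
  funext x y
  simp only [Matrix.mul_apply, Matrix.smul_apply, smul_eq_mul, Finset.mul_sum]
  refine Finset.sum_congr rfl fun z _ => ?_
  rw [← mul_assoc, ← (hl (M x z)).eq, mul_assoc]

end Stmt11Aux

namespace Stmt11Aux

section KeyLemma
variable {S : Type*} [Ring S]

lemma keyU (u v n c lc : S) (hl : ∀ x : S, Commute lc x)
    (hnv : n * v = u * n) (hcu : Commute c u)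
    (huv : u * v = c + lc * (u * n)) (a b : ℕ) :
    u ^ (a + 1) * v ^ (b + 1) = c * (u ^ a * v ^ b) + lc * (u ^ (a + b + 1) * n) := by
  have hnvb : n * v ^ b = u ^ b * n := (SemiconjBy.pow_right hnv b)
  have hle : ∀ w : S, u ^ a * (lc * w) = lc * (u ^ a * w) := fun w => by
    rw [← mul_assoc, ← (hl (u ^ a)).eq, mul_assoc]
  have hca : u ^ a * c = c * u ^ a := ((hcu.pow_right a).eq).symm
  calc u ^ (a + 1) * v ^ (b + 1)
      = u ^ a * ((u * v) * v ^ b) := by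
        rw [pow_succ, pow_succ']; noncomm_ring
    _ = u ^ a * (c * v ^ b) + u ^ a * (lc * ((u * n) * v ^ b)) := by
        rw [huv, add_mul, mul_add, mul_assoc]
    _ = c * (u ^ a * v ^ b) + lc * (u ^ a * ((u * n) * v ^ b)) := by
        rw [← mul_assoc (u ^ a) c, hca, mul_assoc c, hle]
    _ = c * (u ^ a * v ^ b) + lc * (u ^ (a + b + 1) * n) := by
        rw [mul_assoc u n, hnvb, ← mul_assoc u, ← pow_succ', ← mul_assoc (u ^ a), ← pow_add,
          ← add_assoc]
end KeyLemma

section Main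
variable {A : Type*} [Ring A] {m : ℕ}
variable (q qi : A)

lemma star_lemma (hq : ∀ a : A, Commute q a) (hqi : ∀ a : A, Commute qi a)
    (hqinv' : qi * q = 1)
    (B : Matrix (Fin m) (Fin m) A)
    (hB : Rmat A q qi m * kron B B = kron' B B * Rmat A q qi m)
    (k p : ℕ) (hp : 1 ≤ p) :
    Fexpr q qi m B k p
      = ((Rmat A q qi m * kron B (1 : Matrix (Fin m) (Fin m) A)) ^ k *
            (kron (1 : Matrix (Fin m) (Fin m) A) B * (Rmat A q qi m)ᵀ) ^ (p - 1)
          - (kron (1 : Matrix (Fin m) (Fin m) A) B * (Rmat A q qi m)ᵀ) ^ (p - 1) *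
            (Rmat A q qi m * kron B (1 : Matrix (Fin m) (Fin m) A)) ^ k) *
          kron (1 : Matrix (Fin m) (Fin m) A) B
        + (q - qi) • (∑ j ∈ Finset.Icc 1 (p - 1),
            ((kron (1 : Matrix (Fin m) (Fin m) A) B * (Rmat A q qi m)ᵀ) ^ (k + j) *
                (Rmat A q qi m * kron B (1 : Matrix (Fin m) (Fin m) A)) ^ (p - j)
              - (kron (1 : Matrix (Fin m) (Fin m) A) B * (Rmat A q qi m)ᵀ) ^ (p - j) *
                (Rmat A q qi m * kron B (1 : Matrix (Fin m) (Fin m) A)) ^ (k + j)) *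
              Pmat A m) := by
  obtain ⟨p', rfl⟩ : ∃ p', p = p' + 1 := ⟨p - 1, by omega⟩
  unfold Fexpr
  simp only [Nat.add_sub_cancel]
  set R := Rmat A q qi m with hRdef
  set P := Pmat A m with hPdef
  set B1 := kron B (1 : Matrix (Fin m) (Fin m) A) with hB1def
  set B2 := kron (1 : Matrix (Fin m) (Fin m) A) B with hB2def
  set X := B1 * R with hXdef
  set Y := Rᵀ * B2 with hYdef
  set U := B2 * Rᵀ with hUdef
  set V := R * B1 with hVdef
  have hlc : ∀ a : A, Commute (q - qi) a := fun a => (hq a).sub_left (hqi a)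
  have hPR' : P * R = Rᵀ * P := hPR q qi
  have hRP' : R * P = P * Rᵀ := hRP q qi
  have hRtR' : Rᵀ * R = 1 + (q - qi) • (P * R) := hRtR q qi hqinv'
  have hRRt' : R * Rᵀ = 1 + (q - qi) • (R * P) := hRRt q qi hqinv'
  have hPB1' : P * B1 = B2 * P := hPB1 B
  have hPB2' : P * B2 = B1 * P := hPB2 B
  have hBB : R * (B1 * B2) = (B2 * B1) * R := by
    rw [hB1B2, hB2B1]; exact hB
  have sRX : SemiconjBy R X V := (mul_assoc R B1 R).symm
  have sB2Y : SemiconjBy B2 Y U := (mul_assoc B2 Rᵀ B2).symm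
  have sPY : SemiconjBy P Y V := by
    show P * (Rᵀ * B2) = V * P
    rw [← mul_assoc, ← hRP', mul_assoc, hPB2', ← mul_assoc]
  have sB2X : SemiconjBy B2 X V := by
    show B2 * (B1 * R) = V * B2
    rw [← mul_assoc, ← hBB, mul_assoc]
  have sPX : SemiconjBy P X U := by
    show P * (B1 * R) = U * P
    rw [← mul_assoc, hPB1', mul_assoc, hPR', ← mul_assoc]
  have hRY : R * Y = B2 + (q - qi) • (V * P) := by
    rw [hYdef, ← mul_assoc, hRRt', add_mul, one_mul, smul_mul_mat,
      mul_assoc, hPB2', ← mul_assoc]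
  have hUR : U * R = B2 + (q - qi) • (P * X) := by
    rw [hUdef, mul_assoc, hRtR', mul_add, mul_one, mul_smul_mat _ hlc,
      ← mul_assoc, ← hPB1', mul_assoc]
  have hT1 : R * X ^ k * Y ^ (p' + 1)
      = (V ^ k * U ^ p') * B2 + (q - qi) • (V ^ (k + p' + 1) * P) := by
    rw [(sRX.pow_right k).eq, pow_succ', mul_assoc (V ^ k), ← mul_assoc R Y, hRY, add_mul,
      (sB2Y.pow_right p').eq, smul_mul_mat, mul_assoc V P, (sPY.pow_right p').eq, mul_add,
      mul_smul_mat _ hlc, ← mul_assoc (V ^ k) (U ^ p'), ← mul_assoc V (V ^ p'),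
      ← pow_succ', ← mul_assoc (V ^ k), ← pow_add, ← add_assoc]
  have hT3 : U ^ (p' + 1) * V ^ k * R
      = (U ^ p' * V ^ k) * B2 + (q - qi) • (U ^ (k + p' + 1) * P) := by
    rw [mul_assoc, ← (sRX.pow_right k).eq, pow_succ, mul_assoc (U ^ p') U,
      ← mul_assoc U R, hUR, add_mul, (sB2X.pow_right k).eq, smul_mul_mat,
      mul_assoc P X, ← pow_succ', mul_add, mul_smul_mat _ hlc,
      ← mul_assoc (U ^ p') (V ^ k), ← mul_assoc (U ^ p') P, ← (sPX.pow_right p').eq,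
      mul_assoc P (X ^ p'), ← pow_add, (sPX.pow_right (p' + (k + 1))).eq]
    have he : p' + (k + 1) = k + p' + 1 := by omega
    rw [he]
  have hT2 : P * (∑ j ∈ Finset.Icc 1 (p' + 1), X ^ (k + j) * Y ^ (p' + 1 - j))
      = ∑ j ∈ Finset.Icc 1 (p' + 1), (U ^ (k + j) * V ^ (p' + 1 - j)) * P := by
    rw [Finset.mul_sum]
    refine Finset.sum_congr rfl fun j hj => ?_
    rw [← mul_assoc, (sPX.pow_right (k + j)).eq, mul_assoc, (sPY.pow_right (p' + 1 - j)).eq,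
      ← mul_assoc]
  rw [hT1, hT3, hT2]
  rw [Finset.sum_Icc_succ_top (Nat.le_add_left 1 p'),
    Finset.sum_Icc_succ_top (Nat.le_add_left 1 p')]
  simp only [Nat.sub_self, pow_zero, mul_one, one_mul, ← add_assoc]
  rw [sub_mul]
  have hsum : (∑ j ∈ Finset.Icc 1 p',
      (U ^ (k + j) * V ^ (p' + 1 - j) - U ^ (p' + 1 - j) * V ^ (k + j)) * P)
      = (∑ j ∈ Finset.Icc 1 p', (U ^ (k + j) * V ^ (p' + 1 - j)) * P)
        - (∑ j ∈ Finset.Icc 1 p', (U ^ (p' + 1 - j) * V ^ (k + j)) * P) := by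
    rw [← Finset.sum_sub_distrib]
    exact Finset.sum_congr rfl fun j hj => by rw [sub_mul]
  rw [hsum]
  simp only [smul_add, smul_sub]
  abel
end Main
end Stmt11Aux

namespace Stmt11Aux
variable {A : Type*} [Ring A] {m : ℕ}

theorem main_thm (q qi : A) (hq : ∀ a : A, Commute q a) (hqi : ∀ a : A, Commute qi a)
    (hqinv : q * qi = 1) (hqinv' : qi * q = 1)
    (B : Matrix (Fin m) (Fin m) A)
    (hB : Rmat A q qi m * kron B B = kron' B B * Rmat A q qi m) :
    ∀ k p : ℕ, 1 ≤ p → p ≤ k →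
      Fexpr q qi m B k p =
        kron (1 : Matrix (Fin m) (Fin m) A) B * kron B (1 : Matrix (Fin m) (Fin m) A) *
          Fexpr q qi m B (k - 1) (p - 1) := by
  intro k p hp hk
  obtain ⟨k', rfl⟩ : ∃ k', k = k' + 1 := ⟨k - 1, by omega⟩
  obtain ⟨p', rfl⟩ : ∃ p', p = p' + 1 := ⟨p - 1, by omega⟩
  simp only [Nat.add_sub_cancel]
  have hlc : ∀ a : A, Commute (q - qi) a := fun a => (hq a).sub_left (hqi a)
  rcases p' with _ | p''
  · -- p = 1 : both sides vanish
    rw [star_lemma q qi hq hqi hqinv' B hB (k' + 1) 1 le_rfl]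
    rw [show (1 : ℕ) - 1 = 0 from rfl]
    rw [Finset.Icc_eq_empty (by omega : ¬ (1 : ℕ) ≤ 0), Finset.sum_empty, smul_zero, add_zero,
      pow_zero, mul_one, one_mul, sub_self, zero_mul]
    unfold Fexpr
    rw [Finset.Icc_eq_empty (by omega : ¬ (1 : ℕ) ≤ 0)]
    simp only [Finset.sum_empty, mul_zero, smul_zero, add_zero, sub_zero, pow_zero, mul_one,
      one_mul]
    rw [(SemiconjBy.pow_right
      ((mul_assoc (Rmat A q qi m) (kron B (1 : Matrix (Fin m) (Fin m) A)) (Rmat A q qi m)).symm)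
      k').eq]
    rw [sub_self, mul_zero]
  · -- p = p'' + 2
    rw [star_lemma q qi hq hqi hqinv' B hB (k' + 1) (p'' + 1 + 1) (by omega),
        star_lemma q qi hq hqi hqinv' B hB k' (p'' + 1) (by omega)]
    simp only [Nat.add_sub_cancel]
    set R := Rmat A q qi m with hRdef
    set P := Pmat A m with hPdef
    set B1 := kron B (1 : Matrix (Fin m) (Fin m) A) with hB1def
    set B2 := kron (1 : Matrix (Fin m) (Fin m) A) B with hB2def
    set U := B2 * Rᵀ with hUdef
    set V := R * B1 with hVdef
    set N := P * B1 with hNdef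
    set C := B2 * B1 with hCdef
    set Λ := (q - qi) • (1 : Matrix (Fin m × Fin m) (Fin m × Fin m) A) with hLdef
    have hPP' : P * P = 1 := hPP
    have hPR' : P * R = Rᵀ * P := hPR q qi
    have hRP' : R * P = P * Rᵀ := hRP q qi
    have hRtR' : Rᵀ * R = 1 + (q - qi) • (P * R) := hRtR q qi hqinv'
    have hPB1' : P * B1 = B2 * P := hPB1 B
    have hPB2' : P * B2 = B1 * P := hPB2 B
    have hBB : R * (B1 * B2) = C * R := by
      show R * (B1 * B2) = (B2 * B1) * R
      rw [hB1B2, hB2B1]; exact hB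
    -- action lemmas (right-assoc chain forms)
    have aPB1 : ∀ W, P * (B1 * W) = B2 * (P * W) := fun W => by
      rw [← mul_assoc, hPB1', mul_assoc]
    have aPB2 : ∀ W, P * (B2 * W) = B1 * (P * W) := fun W => by
      rw [← mul_assoc, hPB2', mul_assoc]
    have aPR : ∀ W, P * (R * W) = Rᵀ * (P * W) := fun W => by
      rw [← mul_assoc, hPR', mul_assoc]
    have aPRt : ∀ W, P * (Rᵀ * W) = R * (P * W) := fun W => by
      rw [← mul_assoc, ← hRP', mul_assoc]
    have aRtR : ∀ W, Rᵀ * (R * W) = W + (q - qi) • (P * (R * W)) := fun W => by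
      rw [← mul_assoc, hRtR', add_mul, one_mul, smul_mul_mat, mul_assoc]
    have aBB : ∀ W, R * (B1 * (B2 * W)) = C * (R * W) := fun W => by
      rw [← mul_assoc B1 B2 W, ← mul_assoc R (B1 * B2) W, hBB, mul_assoc]
    have cancelP : ∀ M1 M2 : Matrix (Fin m × Fin m) (Fin m × Fin m) A,
        M1 * P = M2 * P → M1 = M2 := fun M1 M2 h => by
      have h2 := congrArg (· * P) h
      simpa only [mul_assoc, hPP', mul_one] using h2
    have hCP : C * P = P * (B1 * B2) := by
      show (B2 * B1) * P = P * (B1 * B2)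
      rw [mul_assoc, ← hPB2', ← mul_assoc, ← hPB1', mul_assoc]
    have hDP : (B1 * B2) * P = P * C := by
      show (B1 * B2) * P = P * (B2 * B1)
      rw [mul_assoc, ← hPB1', ← mul_assoc, ← hPB2', mul_assoc]
    have hBBt : Rᵀ * C = (B1 * B2) * Rᵀ := by
      apply cancelP
      calc Rᵀ * C * P = Rᵀ * (C * P) := by rw [mul_assoc Rᵀ C P]
        _ = Rᵀ * (P * (B1 * B2)) := by rw [hCP]
        _ = P * (R * (B1 * B2)) := by rw [← aPR]
        _ = P * (C * R) := by rw [hBB]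
        _ = (P * C) * R := by rw [← mul_assoc P C R]
        _ = ((B1 * B2) * P) * R := by rw [hDP]
        _ = (B1 * B2) * (P * R) := by rw [mul_assoc (B1 * B2) P R]
        _ = (B1 * B2) * (Rᵀ * P) := by rw [hPR']
        _ = (B1 * B2) * Rᵀ * P := by rw [← mul_assoc (B1 * B2) Rᵀ P]
    have hNV : N * V = U * N := by
      show (P * B1) * (R * B1) = U * N
      rw [mul_assoc, aPB1, aPR, hUdef, hNdef, ← mul_assoc, ← mul_assoc]
    have hNU : N * U = V * N := by
      show (P * B1) * (B2 * Rᵀ) = V * N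
      rw [mul_assoc, show B1 * (B2 * Rᵀ) = Rᵀ * C from by rw [← mul_assoc, ← hBBt],
        hCdef, aPRt, aPB2, hVdef, hNdef, ← mul_assoc, ← mul_assoc]
    have hN2 : N * N = C := by
      show (P * B1) * (P * B1) = C
      rw [mul_assoc P B1 (P * B1), aPB1, ← mul_assoc P P B1, hPP', one_mul]
    have hCU : Commute C U := by
      show C * U = U * C
      rw [← hN2, mul_assoc, hNU, ← mul_assoc, hNV, mul_assoc]
    have hCV : Commute C V := by
      show C * V = V * C
      rw [← hN2, mul_assoc, hNV, ← mul_assoc, hNU, mul_assoc]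
    have hNB2 : N * B2 = C * P := by
      show (P * B1) * B2 = C * P
      rw [mul_assoc, ← hCP]
    have hΛ : ∀ M : Matrix (Fin m × Fin m) (Fin m × Fin m) A, (q - qi) • M = Λ * M :=
      fun M => by rw [hLdef, smul_mul_mat, one_mul]
    have hlΛ : ∀ M : Matrix (Fin m × Fin m) (Fin m × Fin m) A, Commute Λ M := fun M => by
      show Λ * M = M * Λ
      rw [hLdef, smul_mul_mat, one_mul, mul_smul_mat _ hlc, mul_one]
    have hUV : U * V = C + Λ * (U * N) := by
      show B2 * Rᵀ * (R * B1) = C + Λ * (U * N)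
      rw [← hΛ, hUdef, hNdef]
      rw [mul_assoc B2 Rᵀ (R * B1), aRtR, mul_add, mul_smul_mat _ hlc, aPR,
        ← mul_assoc B2 Rᵀ (P * B1)]
    have hVU : V * U = C + Λ * (V * N) := by
      show R * B1 * (B2 * Rᵀ) = C + Λ * (V * N)
      rw [← hΛ, hVdef, hNdef]
      rw [mul_assoc R B1 (B2 * Rᵀ), aBB]
      rw [show R * Rᵀ = 1 + (q - qi) • (R * P) from hRRt q qi hqinv']
      rw [mul_add, mul_one, mul_smul_mat _ hlc]
      congr 1
      rw [← mul_assoc C R P, ← hBB, mul_assoc R (B1 * B2) P, mul_assoc B1 B2 P,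
        ← hPB1', ← mul_assoc R B1 (P * B1)]
    have kU := keyU U V N C Λ hlΛ hNV hCU hUV
    have kV := keyU V U N C Λ hlΛ hNU hCV hVU
    rw [kV k' p'', kU p'' k', show p'' + k' + 1 = k' + p'' + 1 from by omega]
    rw [hΛ, hΛ]
    rw [Finset.sum_Icc_succ_top (Nat.le_add_left 1 p'')]
    have hsum2 : (∑ j ∈ Finset.Icc 1 p'',
          (U ^ (k' + 1 + j) * V ^ (p'' + 1 + 1 - j) - U ^ (p'' + 1 + 1 - j) * V ^ (k' + 1 + j)) * P)
        = C * (∑ j ∈ Finset.Icc 1 p'',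
          (U ^ (k' + j) * V ^ (p'' + 1 - j) - U ^ (p'' + 1 - j) * V ^ (k' + j)) * P) := by
      rw [Finset.mul_sum]
      refine Finset.sum_congr rfl fun j hj => ?_
      have hj2 : j ≤ p'' := (Finset.mem_Icc.mp hj).2
      rw [show k' + 1 + j = (k' + j) + 1 from by omega,
        show p'' + 1 + 1 - j = (p'' + 1 - j) + 1 from by omega,
        kU (k' + j) (p'' + 1 - j), kU (p'' + 1 - j) (k' + j),
        show (p'' + 1 - j) + (k' + j) + 1 = (k' + j) + (p'' + 1 - j) + 1 from by omega,
        add_sub_add_right_eq_sub, ← mul_sub, mul_assoc]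
    rw [hsum2]
    rw [show k' + 1 + (p'' + 1) = (k' + p'' + 1) + 1 from by omega,
      show p'' + 1 + 1 - (p'' + 1) = 0 + 1 from by omega,
      kU (k' + p'' + 1) 0, kU 0 (k' + p'' + 1),
      show 0 + (k' + p'' + 1) + 1 = (k' + p'' + 1) + 0 + 1 from by omega,
      add_sub_add_right_eq_sub]
    simp only [pow_zero, mul_one, one_mul]
    simp only [sub_mul, add_mul, mul_add, mul_sub]
    rw [(hCU.pow_right (k' + p'' + 1)).eq, (hCV.pow_right (k' + p'' + 1)).eq]
    simp only [mul_assoc]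
    rw [hNB2]
    rw [← mul_assoc C Λ, ← (hlΛ C).eq, mul_assoc Λ C]
    abel
end Stmt11Aux


/-- recursion lemma `F(k,p) = (²B·¹B)·F(k−1,p−1)` for `k ≥ p ≥ 1`. -/
theorem stmt11 (q qi : A) (hq : ∀ a : A, Commute q a) (hqi : ∀ a : A, Commute qi a)
    (hqinv : q * qi = 1) (hqinv' : qi * q = 1)
    (m : ℕ) (hm : 1 ≤ m) (B : Matrix (Fin m) (Fin m) A)
    (hB : Rmat A q qi m * kron B B = kron' B B * Rmat A q qi m) :
    ∀ k p : ℕ, 1 ≤ p → p ≤ k →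
      Fexpr q qi m B k p =
        kron (1 : Matrix (Fin m) (Fin m) A) B * kron B (1 : Matrix (Fin m) (Fin m) A) *
          Fexpr q qi m B (k - 1) (p - 1) :=
  Stmt11Aux.main_thm q qi hq hqi hqinv hqinv' B hB
end

section
/- (Vanishing of the bracket expression.) Let B be an m×m matrix over A satisfying R·(B⊠B) = (B⊠'B)·R with R := R_m. Write ¹B := B⊠1, ²B := 1⊠B (1 the m×m identity) and P := P_m. Then for all k ≥ p ≥ 0: R·(¹B·R)^k·(Rᵀ·²B)^p + (q−q⁻¹)·P·Σ_{j=1}^{p}(¹B·R)^{k+j}·(Rᵀ·²B)^{p−j} − (²B·Rᵀ)^p·(R·¹B)^k·R − (q−q⁻¹)·Σ_{j=1}^{p}(²B·Rᵀ)^{p−j}·(R·¹B)^{k+j}·P = 0. -/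
open Matrix

variable {A : Type*} [Ring A]

section AbstractBracket

variable {S : Type*} [Ring S]

lemma semiconj_pow {a u v : S} (h : a * u = v * a) : ∀ n : ℕ, a * u ^ n = v ^ n * a := by
  intro n
  induction n with
  | zero => simp
  | succ n ih => rw [pow_succ, ← mul_assoc, ih, mul_assoc, h, ← mul_assoc, ← pow_succ]

/-- tail version -/
lemma spw {a u v : S} (h : a * u = v * a) (n : ℕ) (w : S) :
    a * (u ^ n * w) = v ^ n * (a * w) := by
  rw [← mul_assoc, semiconj_pow h n, mul_assoc]

lemma comm1 (ε X Y Z : S) (hε : ∀ s : S, Commute ε s)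
    (hZY : Z * Y = X * Z)
    (hXY : X * Y = Y * X + ε * (X * Z) - ε * (Y * Z)) :
    ∀ b : ℕ, X * Y ^ b = Y ^ b * X + ε * (X ^ b * Z) - ε * (Y ^ b * Z) := by
  have hpull : ∀ s t : S, s * (ε * t) = ε * (s * t) := fun s t => by
    rw [← mul_assoc, ← (hε s).eq, mul_assoc]
  intro b
  induction b with
  | zero => simp
  | succ b ih =>
    have hZYb : Z * Y ^ b = X ^ b * Z := semiconj_pow hZY b
    calc X * Y ^ (b+1) = (X * Y ^ b) * Y := by rw [pow_succ, mul_assoc]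
    _ = (Y ^ b * X + ε * (X ^ b * Z) - ε * (Y ^ b * Z)) * Y := by rw [ih]
    _ = Y ^ b * (X * Y) + ε * (X ^ b * (Z * Y)) - ε * (Y ^ b * (Z * Y)) := by
        simp only [sub_mul, add_mul, mul_assoc]
    _ = Y ^ b * (Y * X + ε * (X * Z) - ε * (Y * Z)) + ε * (X ^ b * (X * Z))
          - ε * (Y ^ b * (X * Z)) := by rw [hXY, hZY]
    _ = Y ^ (b+1) * X + ε * (Y ^ b * (X * Z)) - ε * (Y ^ (b+1) * Z)
          + ε * (X ^ (b+1) * Z) - ε * (Y ^ b * (X * Z)) := by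
        simp only [mul_add, mul_sub, hpull, pow_succ, mul_assoc]
    _ = Y ^ (b+1) * X + ε * (X ^ (b+1) * Z) - ε * (Y ^ (b+1) * Z) := by abel

lemma comm1' (ε X Y Z : S) (hε : ∀ s : S, Commute ε s)
    (hZX : Z * X = Y * Z)
    (hXY : X * Y = Y * X + ε * (X * Z) - ε * (Y * Z)) :
    ∀ a : ℕ, X ^ a * Y = Y * X ^ a + ε * (X ^ a * Z) - ε * (Y ^ a * Z) := by
  have hpull : ∀ s t : S, s * (ε * t) = ε * (s * t) := fun s t => by
    rw [← mul_assoc, ← (hε s).eq, mul_assoc]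
  intro a
  induction a with
  | zero => simp
  | succ a ih =>
    have hZXa : Z * X ^ a = Y ^ a * Z := semiconj_pow hZX a
    calc X ^ (a+1) * Y = X * (X ^ a * Y) := by rw [pow_succ', mul_assoc]
    _ = X * (Y * X ^ a) + ε * (X * (X ^ a * Z)) - ε * (X * (Y ^ a * Z)) := by
        rw [ih]; simp only [mul_add, mul_sub, hpull]
    _ = (X * Y) * X ^ a + ε * (X ^ (a+1) * Z) - ε * (X * (Y ^ a * Z)) := by
        rw [← mul_assoc X (X ^ a) Z, ← pow_succ', ← mul_assoc]
    _ = (Y * X + ε * (X * Z) - ε * (Y * Z)) * X ^ a + ε * (X ^ (a+1) * Z)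
          - ε * (X * (Y ^ a * Z)) := by rw [hXY]
    _ = Y * X ^ (a+1) + ε * (X * (Z * X ^ a)) - ε * (Y * (Z * X ^ a))
          + ε * (X ^ (a+1) * Z) - ε * (X * (Y ^ a * Z)) := by
        simp only [sub_mul, add_mul, mul_assoc, pow_succ']
    _ = Y * X ^ (a+1) + ε * (X ^ (a+1) * Z) - ε * (Y ^ (a+1) * Z) := by
        rw [hZXa]
        simp only [← mul_assoc, ← pow_succ', ← pow_succ]
        abel



lemma commab (ε X Y Z : S) (hε : ∀ s : S, Commute ε s)
    (hZX : Z * X = Y * Z) (hZY : Z * Y = X * Z)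
    (hXY : X * Y = Y * X + ε * (X * Z) - ε * (Y * Z)) :
    ∀ a b : ℕ, X ^ a * Y ^ b
      = Y ^ b * X ^ a + ε * ((∑ i ∈ Finset.range a, X ^ (b+i) * Y ^ (a-1-i)) * Z)
        - ε * ((∑ i ∈ Finset.range a, X ^ i * Y ^ (a+b-1-i)) * Z) := by
  have hpull : ∀ s t : S, s * (ε * t) = ε * (s * t) := fun s t => by
    rw [← mul_assoc, ← (hε s).eq, mul_assoc]
  intro a b
  induction a with
  | zero => simp
  | succ a ih =>
    have hZXa : Z * X ^ a = Y ^ a * Z := semiconj_pow hZX a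
    have e1 : ∀ i ∈ Finset.range a, X ^ (b+(i+1)) * Y ^ (a+1-1-(i+1)) * Z
        = X * (X ^ (b+i) * Y ^ (a-1-i) * Z) := by
      intro i hi
      rw [show b+(i+1) = (b+i)+1 by omega, show a+1-1-(i+1) = a-1-i by omega, pow_succ']
      noncomm_ring
    have e2 : ∀ i ∈ Finset.range a, X ^ (i+1) * Y ^ (a+1+b-1-(i+1)) * Z
        = X * (X ^ i * Y ^ (a+b-1-i) * Z) := by
      intro i hi
      rw [show a+1+b-1-(i+1) = a+b-1-i by omega, pow_succ']
      noncomm_ring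
    have hsum1 : (∑ i ∈ Finset.range (a+1), X ^ (b+i) * Y ^ (a+1-1-i)) * Z
        = X * ((∑ i ∈ Finset.range a, X ^ (b+i) * Y ^ (a-1-i)) * Z) + X ^ b * Y ^ a * Z := by
      rw [Finset.sum_mul, Finset.sum_range_succ' (fun i => X ^ (b+i) * Y ^ (a+1-1-i) * Z),
        Finset.sum_congr rfl e1, ← Finset.mul_sum, ← Finset.sum_mul,
        show a+1-1-0 = a by omega, Nat.add_zero]
    have hsum2 : (∑ i ∈ Finset.range (a+1), X ^ i * Y ^ (a+1+b-1-i)) * Z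
        = X * ((∑ i ∈ Finset.range a, X ^ i * Y ^ (a+b-1-i)) * Z) + Y ^ (a+b) * Z := by
      rw [Finset.sum_mul, Finset.sum_range_succ' (fun i => X ^ i * Y ^ (a+1+b-1-i) * Z),
        Finset.sum_congr rfl e2, ← Finset.mul_sum, ← Finset.sum_mul, pow_zero, one_mul,
        show a+1+b-1-0 = a+b by omega]
    have h1 : X ^ (a+1) * Y ^ b = X * (X ^ a * Y ^ b) := by rw [pow_succ', mul_assoc]
    have h2 : X * (Y ^ b * X ^ a) = Y ^ b * X ^ (a+1) + ε * (X ^ b * Y ^ a * Z)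
        - ε * (Y ^ (a+b) * Z) := by
      rw [← mul_assoc, comm1 ε X Y Z hε hZY hXY b]
      simp only [sub_mul, add_mul, mul_assoc, hZXa]
      simp only [← mul_assoc, ← pow_succ', ← pow_succ, ← pow_add]
      rw [Nat.add_comm b a]
    rw [h1, ih, hsum1, hsum2]
    simp only [mul_add, mul_sub, hpull, h2]
    abel

lemma sum_shift (X Y : S) (c d n : ℕ) (hcd : c + d = n + 1) :
    (∑ i ∈ Finset.range c, X ^ (d+i) * Y ^ (c-1-i))
      = ∑ j ∈ Finset.Ico d (d+c), X ^ j * Y ^ (n-j) := by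
  rw [Finset.sum_Ico_eq_sum_range, show d + c - d = c by omega]
  apply Finset.sum_congr rfl
  intro i hi
  simp only [Finset.mem_range] at hi
  rw [show n - (d + i) = c-1-i by omega]


lemma Ssym (ε X Y Z : S) (hε : ∀ s : S, Commute ε s)
    (hZX : Z * X = Y * Z) (hZY : Z * Y = X * Z)
    (hXY : X * Y = Y * X + ε * (X * Z) - ε * (Y * Z)) (a b : ℕ) (hba : b ≤ a) :
    X ^ a * Y ^ b + Y ^ a * X ^ b = X ^ b * Y ^ a + Y ^ b * X ^ a := by
  rcases Nat.eq_zero_or_pos (a + b) with hab | hab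
  · obtain ⟨rfl, rfl⟩ : a = 0 ∧ b = 0 := by omega
    simp
  set n := a + b - 1 with hn
  have hcd1 : a + b = n + 1 := by omega
  have hcd2 : b + a = n + 1 := by omega
  have eq1 := commab ε X Y Z hε hZX hZY hXY a b
  have eq2 := commab ε X Y Z hε hZX hZY hXY b a
  rw [sum_shift X Y a b n hcd1, show a + b - 1 = n by omega] at eq1
  rw [sum_shift X Y b a n hcd2, show b + a - 1 = n by omega] at eq2
  have d1 : (∑ j ∈ Finset.Ico b (b + a), X ^ j * Y ^ (n - j))
      = (∑ j ∈ Finset.Ico b a, X ^ j * Y ^ (n - j))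
        + ∑ j ∈ Finset.Ico a (a + b), X ^ j * Y ^ (n - j) := by
    rw [show b + a = a + b by omega]
    exact (Finset.sum_Ico_consecutive _ hba (by omega)).symm
  have d2 : (∑ i ∈ Finset.range a, X ^ i * Y ^ (n - i))
      = (∑ j ∈ Finset.Ico 0 b, X ^ j * Y ^ (n - j))
        + ∑ j ∈ Finset.Ico b a, X ^ j * Y ^ (n - j) := by
    rw [Finset.range_eq_Ico]
    exact (Finset.sum_Ico_consecutive _ (by omega) hba).symm
  have d3 : (∑ i ∈ Finset.range b, X ^ i * Y ^ (n - i))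
      = ∑ j ∈ Finset.Ico 0 b, X ^ j * Y ^ (n - j) := by
    rw [Finset.range_eq_Ico]
  rw [d1, d2] at eq1
  rw [d3] at eq2
  rw [eq1, eq2]
  simp only [add_mul, mul_add]
  abel

theorem bracket0 (ε P R Rt B1 B2 : S)
    (hε : ∀ s : S, Commute ε s)
    (hPP : P * P = 1)
    (hPB1 : P * B1 = B2 * P) (hPB2 : P * B2 = B1 * P)
    (hPR : P * R = Rt * P)
    (hHecke : Rt * R = 1 + ε * (P * R))
    (hYB : R * (B1 * B2) = B2 * (B1 * R)) :
    ∀ k p : ℕ, p ≤ k →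
      R * (B1 * R) ^ k * (Rt * B2) ^ p
        + ε * (P * ∑ j ∈ Finset.Icc 1 p, (B1 * R) ^ (k + j) * (Rt * B2) ^ (p - j))
        - (B2 * Rt) ^ p * (R * B1) ^ k * R
        - ε * (∑ j ∈ Finset.Icc 1 p, (B2 * Rt) ^ (p - j) * (R * B1) ^ (k + j) * P) = 0 := by
  intro k p hpk
  have hpull : ∀ s t : S, s * (ε * t) = ε * (s * t) := fun s t => by
    rw [← mul_assoc, ← (hε s).eq, mul_assoc]
  have hPPw : ∀ w : S, P * (P * w) = w := fun w => by rw [← mul_assoc, hPP, one_mul]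
  have hPB1w : ∀ w : S, P * (B1 * w) = B2 * (P * w) := fun w => by
    rw [← mul_assoc, hPB1, mul_assoc]
  have hPB2w : ∀ w : S, P * (B2 * w) = B1 * (P * w) := fun w => by
    rw [← mul_assoc, hPB2, mul_assoc]
  have hPRw : ∀ w : S, P * (R * w) = Rt * (P * w) := fun w => by
    rw [← mul_assoc, hPR, mul_assoc]
  have hRPw : ∀ w : S, R * (P * w) = P * (Rt * w) := by
    intro w
    rw [← hPPw (R * (P * w)), hPRw, hPPw]
  have hRtw : ∀ w : S, Rt * w = P * (R * (P * w)) := fun w => by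
    rw [hPRw, hPPw]
  have hRtRw : ∀ w : S, Rt * (R * w) = w + ε * (P * (R * w)) := fun w => by
    rw [← mul_assoc, hHecke, add_mul, one_mul, mul_assoc, mul_assoc]
  have hRRtw : ∀ w : S, R * (Rt * w) = w + ε * (R * (P * w)) := by
    intro w
    rw [hRtw w, hRPw, hRtRw, mul_add, hPPw, hpull, hPPw]
  have hYBw : ∀ w : S, R * (B1 * (B2 * w)) = B2 * (B1 * (R * w)) := by
    intro w
    have h := congrArg (· * w) hYB
    simpa only [mul_assoc] using h
  have hdualw : ∀ w : S, Rt * (B2 * (B1 * w)) = B1 * (B2 * (Rt * w)) := by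
    intro w
    rw [hRtw (B2 * (B1 * w)), hPB2w, hPB1w, hYBw, hPB2w, hPB1w, hPRw, hPPw]
  have hPRt : P * Rt = R * P := by
    have h := hRPw 1
    rw [mul_one, mul_one] at h
    exact h.symm
  have hdual1 : Rt * (B2 * B1) = B1 * (B2 * Rt) := by
    have h := hdualw 1
    rwa [mul_one, mul_one] at h
  obtain ⟨X, hXd⟩ : ∃ X : S, X = B1 * R := ⟨_, rfl⟩
  obtain ⟨Xp, hXpd⟩ : ∃ Xp : S, Xp = R * B1 := ⟨_, rfl⟩
  obtain ⟨Y, hYd⟩ : ∃ Y : S, Y = Rt * B2 := ⟨_, rfl⟩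
  obtain ⟨Yp, hYpd⟩ : ∃ Yp : S, Yp = B2 * Rt := ⟨_, rfl⟩
  obtain ⟨Z, hZd⟩ : ∃ Z : S, Z = B1 * P := ⟨_, rfl⟩
  simp only [← hXd, ← hXpd, ← hYd, ← hYpd]
  have sRX : R * X = Xp * R := by rw [hXd, hXpd, ← mul_assoc]
  have sB2X : B2 * X = Xp * B2 := by rw [hXd, hXpd, ← hYB, mul_assoc]
  have sB2Y : B2 * Y = Yp * B2 := by rw [hYd, hYpd, ← mul_assoc]
  have sB1Yp : B1 * Yp = Y * B1 := by rw [hYpd, hYd, ← hdual1, mul_assoc]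
  have sB1Xp : B1 * Xp = X * B1 := by rw [hXd, hXpd, ← mul_assoc]
  have sPX : P * X = Yp * P := by
    rw [hXd, hYpd, hPB1w, hPR, ← mul_assoc]
  have sPY : P * Y = Xp * P := by rw [hYd, hXpd, ← hRPw, hPB2, ← mul_assoc]
  have sPXp : P * Xp = Y * P := by
    rw [hXpd, hYd, hPRw, hPB1, ← mul_assoc]
  have sPYp : P * Yp = X * P := by
    rw [hYpd, hXd, hPB2w, hPRt, ← mul_assoc]
  have sZX : Z * X = Y * Z := by
    rw [hZd, mul_assoc, sPX, ← mul_assoc, sB1Yp, mul_assoc]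
  have sZY : Z * Y = X * Z := by
    rw [hZd, mul_assoc, sPY, ← mul_assoc, sB1Xp, mul_assoc]
  -- one-step reductions
  have c3 : R * Y = B2 + ε * (Xp * P) := by
    rw [hYd, hXpd, hRRtw, hPB2, ← mul_assoc R B1 P]
  have c4 : Yp * R = B2 + ε * (P * X) := by
    rw [hYpd, hXd, mul_assoc, hHecke, mul_add, mul_one, hpull, ← mul_assoc B2 P R,
      ← hPB1, mul_assoc]
  have c1 : X * Y = B1 * B2 + ε * (X * Z) := by
    rw [hXd, hYd, hZd, mul_assoc B1 R, hRRtw, mul_add, hpull, hPB2, ← mul_assoc B1 R]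
  have c2 : Y * X = B1 * B2 + ε * (Z * X) := by
    rw [hYd, hXd, hZd, mul_assoc Rt B2, ← hYB, hRtRw, hYB, hPB2w, ← mul_assoc B1 P]
  have comm0 : X * Y = Y * X + ε * (X * Z) - ε * (Y * Z) := by
    rw [c1, c2]
    have h : ε * (Z * X) = ε * (Y * Z) := by rw [sZX]
    rw [h]
    abel
  -- power transport lemmas
  have pRX : ∀ n, R * X ^ n = Xp ^ n * R := fun n => semiconj_pow sRX n
  have pB2X : ∀ n, B2 * X ^ n = Xp ^ n * B2 := fun n => semiconj_pow sB2X n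
  have pB2Y : ∀ n, B2 * Y ^ n = Yp ^ n * B2 := fun n => semiconj_pow sB2Y n
  have pPX : ∀ n, P * X ^ n = Yp ^ n * P := fun n => semiconj_pow sPX n
  have pPY : ∀ n, P * Y ^ n = Xp ^ n * P := fun n => semiconj_pow sPY n
  have fredA : ∀ p' : ℕ, R * X ^ k * Y ^ (p'+1)
      = B2 * (X ^ k * Y ^ p') + ε * (P * Y ^ (k+p'+1)) := by
    intro p'
    calc R * X ^ k * Y ^ (p'+1) = (Xp ^ k * R) * (Y * Y ^ p') := by rw [pRX, pow_succ']
    _ = Xp ^ k * ((R * Y) * Y ^ p') := by rw [mul_assoc, ← mul_assoc R Y]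
    _ = Xp ^ k * ((B2 + ε * (Xp * P)) * Y ^ p') := by rw [c3]
    _ = (Xp ^ k * B2) * Y ^ p' + ε * (Xp ^ k * (Xp * (P * Y ^ p'))) := by
        simp only [add_mul, mul_add, hpull, mul_assoc]
    _ = B2 * (X ^ k * Y ^ p') + ε * (Xp ^ k * (Xp * (Xp ^ p' * P))) := by
        rw [← pB2X, pPY, mul_assoc]
    _ = B2 * (X ^ k * Y ^ p') + ε * (Xp ^ (k+p'+1) * P) := by
        rw [← mul_assoc Xp (Xp ^ p') P, ← pow_succ', ← mul_assoc (Xp ^ k) (Xp ^ (p'+1)) P,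
          ← pow_add, show k + (p'+1) = k+p'+1 by omega]
    _ = B2 * (X ^ k * Y ^ p') + ε * (P * Y ^ (k+p'+1)) := by rw [← pPY]
  have gredA : ∀ p' : ℕ, Yp ^ (p'+1) * Xp ^ k * R
      = B2 * (Y ^ p' * X ^ k) + ε * (P * X ^ (k+p'+1)) := by
    intro p'
    calc Yp ^ (p'+1) * Xp ^ k * R = (Yp ^ p' * Yp) * (R * X ^ k) := by
          rw [mul_assoc, ← pRX, pow_succ]
    _ = Yp ^ p' * ((Yp * R) * X ^ k) := by rw [mul_assoc, ← mul_assoc Yp R]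
    _ = Yp ^ p' * ((B2 + ε * (P * X)) * X ^ k) := by rw [c4]
    _ = (Yp ^ p' * B2) * X ^ k + ε * (Yp ^ p' * (P * (X * X ^ k))) := by
        simp only [add_mul, mul_add, hpull, mul_assoc]
    _ = B2 * (Y ^ p' * X ^ k) + ε * ((Yp ^ p' * P) * (X * X ^ k)) := by
        rw [← pB2Y, mul_assoc, ← mul_assoc (Yp ^ p') P]
    _ = B2 * (Y ^ p' * X ^ k) + ε * (P * (X ^ p' * (X * X ^ k))) := by
        rw [← pPX, mul_assoc]
    _ = B2 * (Y ^ p' * X ^ k) + ε * (P * X ^ (k+p'+1)) := by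
        rw [← mul_assoc (X ^ p') X, ← pow_succ, ← pow_add, show p' + 1 + k = k+p'+1 by omega]
  have gredB : ∀ a b : ℕ, Yp ^ a * Xp ^ b * P = P * (X ^ a * Y ^ b) := by
    intro a b
    calc Yp ^ a * Xp ^ b * P = Yp ^ a * (Xp ^ b * P) := by rw [mul_assoc]
    _ = (Yp ^ a * P) * Y ^ b := by rw [← pPY, ← mul_assoc]
    _ = (P * X ^ a) * Y ^ b := by rw [← pPX]
    _ = P * (X ^ a * Y ^ b) := by rw [mul_assoc]
  have W : P * (X * Y) = B2 * (B1 * P) + ε * (P * (X * Z)) := by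
    have hYpXp : Yp * Xp = B2 * B1 + ε * (P * (B1 * (R * B1))) := by
      rw [hYpd, hXpd, mul_assoc, hRtRw, mul_add, hpull, ← hPB1w]
    calc P * (X * Y) = (P * X) * Y := by rw [mul_assoc]
    _ = Yp * (P * Y) := by rw [sPX, mul_assoc]
    _ = (Yp * Xp) * P := by rw [sPY, mul_assoc]
    _ = (B2 * B1) * P + ε * ((P * (B1 * (R * B1))) * P) := by
        rw [hYpXp, add_mul, mul_assoc ε]
    _ = B2 * (B1 * P) + ε * (P * (X * Z)) := by
        rw [mul_assoc B2 B1 P, mul_assoc P, hXd, hZd]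
        congr 3
        noncomm_ring
  have KEY : ∀ a b : ℕ, B2 * ((X ^ a * Y ^ b) * Z)
      = P * (Y ^ (a+1) * X ^ (b+1)) - ε * (P * (Y ^ (a+b+1) * Z)) := by
    intro a b
    have comm1'b := comm1' ε X Y Z hε sZX comm0 (b+1)
    calc B2 * ((X ^ a * Y ^ b) * Z) = Xp ^ a * (Yp ^ b * (B2 * (B1 * P))) := by
          rw [mul_assoc, spw sB2X, spw sB2Y, hZd]
    _ = Xp ^ a * (Yp ^ b * (P * (X * Y))) - ε * (Xp ^ a * (Yp ^ b * (P * (X * Z)))) := by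
        have W' : B2 * (B1 * P) = P * (X * Y) - ε * (P * (X * Z)) := by rw [W]; abel
        rw [W']
        simp only [mul_sub, hpull]
    _ = P * (Y ^ a * (X ^ b * (X * Y))) - ε * (P * (Y ^ a * (X ^ b * (X * Z)))) := by
        rw [← spw sPX, ← spw sPY, ← spw sPX, ← spw sPY]
    _ = P * (Y ^ a * (X ^ (b+1) * Y)) - ε * (P * (Y ^ a * (X ^ (b+1) * Z))) := by
        rw [← mul_assoc (X ^ b) X, ← pow_succ, ← mul_assoc (X ^ b) X, ← pow_succ]
    _ = P * (Y ^ a * (Y * X ^ (b+1))) + ε * (P * (Y ^ a * (X ^ (b+1) * Z)))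
          - ε * (P * (Y ^ a * (Y ^ (b+1) * Z)))
          - ε * (P * (Y ^ a * (X ^ (b+1) * Z))) := by
        rw [comm1'b]
        simp only [mul_add, mul_sub, hpull]
    _ = P * (Y ^ (a+1) * X ^ (b+1)) - ε * (P * (Y ^ (a+b+1) * Z)) := by
        rw [← mul_assoc (Y ^ a) Y, ← pow_succ, ← mul_assoc (Y ^ a) (Y ^ (b+1)),
          ← pow_add, show a + (b+1) = a+b+1 by omega]
        abel
  -- final assembly
  rcases Nat.eq_zero_or_pos p with rfl | hp
  · -- p = 0
    rw [show Finset.Icc 1 0 = (∅ : Finset ℕ) from rfl]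
    simp only [Finset.sum_empty, mul_zero, pow_zero, mul_one, one_mul]
    rw [pRX k]
    abel
  obtain ⟨p', rfl⟩ : ∃ p', p = p' + 1 := ⟨p - 1, by omega⟩
  set N := k + p' + 1 with hN
  -- the index sums
  set SSA := ∑ i ∈ Finset.range k, Y ^ (p'+1+i) * X ^ (k-i) with hSA
  set SSB := ∑ i ∈ Finset.range k, Y ^ (i+1) * X ^ (k+p'-i) with hSB
  set SSI := ∑ j ∈ Finset.Icc 1 (p'+1), X ^ (k+j) * Y ^ (p'+1-j) with hSI
  set SSC := ∑ j ∈ Finset.Icc 1 (p'+1), X ^ (p'+1-j) * Y ^ (k+j) with hSC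
  have hc := commab ε X Y Z hε sZX sZY comm0 k p'
  have hSa : B2 * ((∑ i ∈ Finset.range k, X ^ (p'+i) * Y ^ (k-1-i)) * Z)
      = P * SSA - ∑ i ∈ Finset.range k, ε * (P * (Y ^ (k+p') * Z)) := by
    rw [Finset.sum_mul, Finset.mul_sum, hSA, Finset.mul_sum, ← Finset.sum_sub_distrib]
    apply Finset.sum_congr rfl
    intro i hi
    simp only [Finset.mem_range] at hi
    rw [KEY (p'+i) (k-1-i), show p'+i+1 = p'+1+i by omega, show k-1-i+1 = k-i by omega,
      show p'+i+(k-1-i)+1 = k+p' by omega]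
  have hSb : B2 * ((∑ i ∈ Finset.range k, X ^ i * Y ^ (k+p'-1-i)) * Z)
      = P * SSB - ∑ i ∈ Finset.range k, ε * (P * (Y ^ (k+p') * Z)) := by
    rw [Finset.sum_mul, Finset.mul_sum, hSB, Finset.mul_sum, ← Finset.sum_sub_distrib]
    apply Finset.sum_congr rfl
    intro i hi
    simp only [Finset.mem_range] at hi
    rw [KEY i (k+p'-1-i), show k+p'-1-i+1 = k+p'-i by omega,
      show i+(k+p'-1-i)+1 = k+p' by omega]
  have hE14eq : B2 * (X ^ k * Y ^ p')
      = B2 * (Y ^ p' * X ^ k) + ε * (P * SSA) - ε * (P * SSB) := by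
    rw [hc, mul_sub, mul_add, hpull, hpull, hSa, hSb]
    simp only [mul_sub]
    abel
  -- rewrite the goal
  rw [fredA p', gredA p', hE14eq,
    Finset.sum_congr rfl (fun j _ => gredB (p'+1-j) (k+j)), ← Finset.mul_sum, ← hSC, ← hN]
  -- the scalar identity
  have hT : SSA - SSB + Y ^ N + SSI - X ^ N - SSC = 0 := by
    have rA : SSA = ∑ a ∈ Finset.Ico (p'+1) N, Y ^ a * X ^ (N - a) := by
      rw [hSA, Finset.sum_Ico_eq_sum_range, show N - (p'+1) = k by omega]
      apply Finset.sum_congr rfl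
      intro i hi
      simp only [Finset.mem_range] at hi
      rw [show N - (p'+1+i) = k - i by omega]
    have rB : SSB = ∑ a ∈ Finset.Ico 1 (k+1), Y ^ a * X ^ (N - a) := by
      rw [hSB, Finset.sum_Ico_eq_sum_range, show k + 1 - 1 = k by omega]
      apply Finset.sum_congr rfl
      intro i hi
      simp only [Finset.mem_range] at hi
      rw [show (1:ℕ) + i = i + 1 by omega, show N - (i+1) = k + p' - i by omega]
    have rI : SSI = ∑ a ∈ Finset.Ico (k+1) (N+1), X ^ a * Y ^ (N - a) := by
      rw [hSI, ← Finset.Ico_add_one_right_eq_Icc, Finset.sum_Ico_eq_sum_range,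
        Finset.sum_Ico_eq_sum_range, show p' + 1 + 1 - 1 = p' + 1 by omega,
        show N + 1 - (k+1) = p' + 1 by omega]
      apply Finset.sum_congr rfl
      intro i hi
      simp only [Finset.mem_range] at hi
      rw [show k + (1+i) = k+1+i by omega, show p' + 1 - (1+i) = p' - i by omega,
        show N - (k+1+i) = p' - i by omega]
    have rC : SSC = ∑ a ∈ Finset.Ico 0 (p'+1), X ^ a * Y ^ (N - a) := by
      rw [hSC, ← Finset.Ico_add_one_right_eq_Icc, Finset.sum_Ico_eq_sum_range,
        Finset.sum_Ico_eq_sum_range, show p' + 1 + 1 - 1 = p' + 1 by omega,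
        show p' + 1 - 0 = p' + 1 by omega,
        ← Finset.sum_range_reflect (fun i => X ^ (0+i) * Y ^ (N - (0+i))) (p'+1)]
      apply Finset.sum_congr rfl
      intro i hi
      simp only [Finset.mem_range] at hi
      rw [show p' + 1 - (1+i) = p' + 1 - 1 - i by omega, show (0:ℕ) + (p'+1-1-i) = p' - i by omega,
        show N - (p' - i) = k + (1+i) by omega, show p' + 1 - 1 - i = p' - i by omega]
    have key2 : ∑ a ∈ Finset.Ico (k+1) N, (Y ^ a * X ^ (N-a) + X ^ a * Y ^ (N-a))
        = ∑ a ∈ Finset.Ico 1 (p'+1), (Y ^ a * X ^ (N-a) + X ^ a * Y ^ (N-a)) := by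
      apply Finset.sum_nbij' (i := fun a => N - a) (j := fun a => N - a)
      · intro a ha
        simp only [Finset.mem_Ico] at ha ⊢
        omega
      · intro a ha
        simp only [Finset.mem_Ico] at ha ⊢
        omega
      · intro a ha
        simp only [Finset.mem_Ico] at ha
        omega
      · intro a ha
        simp only [Finset.mem_Ico] at ha
        omega
      · intro a ha
        simp only [Finset.mem_Ico] at ha
        have hs := Ssym ε X Y Z hε sZX sZY comm0 a (N - a) (by omega)
        rw [show N - (N - a) = a by omega]
        calc Y ^ a * X ^ (N-a) + X ^ a * Y ^ (N-a)
            = X ^ a * Y ^ (N-a) + Y ^ a * X ^ (N-a) := add_comm _ _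
        _ = X ^ (N-a) * Y ^ a + Y ^ (N-a) * X ^ a := hs
        _ = Y ^ (N-a) * X ^ a + X ^ (N-a) * Y ^ a := add_comm _ _
    have u1a : (∑ a ∈ Finset.Ico (p'+1) (k+1), Y ^ a * X ^ (N - a))
        + ∑ a ∈ Finset.Ico (k+1) N, Y ^ a * X ^ (N - a)
        = ∑ a ∈ Finset.Ico (p'+1) N, Y ^ a * X ^ (N - a) :=
      Finset.sum_Ico_consecutive _ (by omega) (by omega)
    have u1b : (∑ a ∈ Finset.Ico 1 (p'+1), Y ^ a * X ^ (N - a))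
        + ∑ a ∈ Finset.Ico (p'+1) (k+1), Y ^ a * X ^ (N - a)
        = ∑ a ∈ Finset.Ico 1 (k+1), Y ^ a * X ^ (N - a) :=
      Finset.sum_Ico_consecutive _ (by omega) (by omega)
    have u2 : (∑ a ∈ Finset.Ico (k+1) (N+1), X ^ a * Y ^ (N - a))
        = (∑ a ∈ Finset.Ico (k+1) N, X ^ a * Y ^ (N - a)) + X ^ N := by
      rw [Finset.sum_Ico_succ_top (by omega : k+1 ≤ N), Nat.sub_self, pow_zero, mul_one]
    have u3 : (∑ a ∈ Finset.Ico 0 (p'+1), X ^ a * Y ^ (N - a))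
        = Y ^ N + ∑ a ∈ Finset.Ico 1 (p'+1), X ^ a * Y ^ (N - a) := by
      rw [Finset.sum_eq_sum_Ico_succ_bot (by omega : 0 < p'+1), pow_zero, one_mul,
        Nat.sub_zero]
    rw [rA, rB, rI, rC, ← u1a, ← u1b, u2, u3]
    rw [Finset.sum_add_distrib, Finset.sum_add_distrib] at key2
    have key3 : ((∑ a ∈ Finset.Ico (k+1) N, Y ^ a * X ^ (N-a))
          + ∑ a ∈ Finset.Ico (k+1) N, X ^ a * Y ^ (N-a))
        - ((∑ a ∈ Finset.Ico 1 (p'+1), Y ^ a * X ^ (N-a))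
          + ∑ a ∈ Finset.Ico 1 (p'+1), X ^ a * Y ^ (N-a)) = 0 := by
      rw [sub_eq_zero]
      exact key2
    rw [← key3]
    abel
  have hTP : ε * (P * SSA) - ε * (P * SSB) + ε * (P * Y ^ N) + ε * (P * SSI)
      - ε * (P * X ^ N) - ε * (P * SSC) = 0 := by
    have h := congrArg (fun t => ε * (P * t)) hT
    simp only [mul_sub, mul_add, mul_zero] at h
    rw [← h]
  rw [← hTP]
  abel

end AbstractBracket


section MatrixLemmas

lemma Pmul_apply (n : ℕ) (M : Matrix (Fin n × Fin n) (Fin n × Fin n) A) (x y : Fin n × Fin n) :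
    (Pmat A n * M) x y = M (x.2, x.1) y := by
  obtain ⟨a,b⟩ := x
  simp [Matrix.mul_apply, Pmat, PmatG, Fintype.sum_prod_type, ite_and,
    Finset.sum_ite_eq, Finset.sum_ite_eq', ite_mul, eq_comm]

lemma mul_P_apply (n : ℕ) (M : Matrix (Fin n × Fin n) (Fin n × Fin n) A) (x y : Fin n × Fin n) :
    (M * Pmat A n) x y = M x (y.2, y.1) := by
  obtain ⟨c,d⟩ := y
  simp [Matrix.mul_apply, Pmat, PmatG, Fintype.sum_prod_type, ite_and,
    Finset.sum_ite_eq, Finset.sum_ite_eq', mul_ite, eq_comm]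

lemma PP_eq_one (n : ℕ) : Pmat A n * Pmat A n = 1 := by
  ext ⟨a,b⟩ ⟨c,d⟩
  simp [Matrix.mul_apply, Pmat, PmatG, Matrix.one_apply, Fintype.sum_prod_type,
    ite_and, Finset.sum_ite_eq, Finset.sum_ite_eq', Prod.ext_iff, eq_comm]

lemma P_kronB1 (n : ℕ) (B : Matrix (Fin n) (Fin n) A) :
    Pmat A n * kron B (1 : Matrix (Fin n) (Fin n) A)
      = kron (1 : Matrix (Fin n) (Fin n) A) B * Pmat A n := by
  ext ⟨a,b⟩ ⟨c,d⟩
  simp [Matrix.mul_apply, Pmat, PmatG, kron, Matrix.one_apply, Fintype.sum_prod_type,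
    ite_and, Finset.sum_ite_eq, Finset.sum_ite_eq', mul_ite, ite_mul, eq_comm]

lemma P_kron1B (n : ℕ) (B : Matrix (Fin n) (Fin n) A) :
    Pmat A n * kron (1 : Matrix (Fin n) (Fin n) A) B
      = kron B (1 : Matrix (Fin n) (Fin n) A) * Pmat A n := by
  ext ⟨a,b⟩ ⟨c,d⟩
  simp [Matrix.mul_apply, Pmat, PmatG, kron, Matrix.one_apply, Fintype.sum_prod_type,
    ite_and, Finset.sum_ite_eq, Finset.sum_ite_eq', mul_ite, ite_mul, eq_comm]

lemma kron_mul_kron (n : ℕ) (B C : Matrix (Fin n) (Fin n) A) :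
    kron B (1 : Matrix (Fin n) (Fin n) A) * kron (1 : Matrix (Fin n) (Fin n) A) C
      = kron B C := by
  ext ⟨a,b⟩ ⟨c,d⟩
  simp [Matrix.mul_apply, kron, Matrix.one_apply, Fintype.sum_prod_type,
    ite_and, Finset.sum_ite_eq, Finset.sum_ite_eq', mul_ite, ite_mul, eq_comm]

lemma kron_mul_kron' (n : ℕ) (B C : Matrix (Fin n) (Fin n) A) :
    kron (1 : Matrix (Fin n) (Fin n) A) C * kron B (1 : Matrix (Fin n) (Fin n) A)
      = kron' B C := by
  ext ⟨a,b⟩ ⟨c,d⟩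
  simp [Matrix.mul_apply, kron, kron', Matrix.one_apply, Fintype.sum_prod_type,
    ite_and, Finset.sum_ite_eq, Finset.sum_ite_eq', mul_ite, ite_mul, eq_comm]

lemma P_mul_R (n : ℕ) (q qi : A) :
    Pmat A n * Rmat A q qi n = (Rmat A q qi n)ᵀ * Pmat A n := by
  ext ⟨a,b⟩ ⟨c,d⟩
  rw [Pmul_apply, mul_P_apply]
  simp only [Matrix.transpose_apply, Rmat]
  split_ifs <;> first | rfl | omega

lemma R_col_support (n : ℕ) (q qi : A) (z x : Fin n × Fin n) (h1 : z ≠ x)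
    (h2 : z ≠ (x.2, x.1)) : Rmat A q qi n z x = 0 := by
  simp only [Rmat]
  split_ifs <;> try rfl
  all_goals (exfalso; simp_all [Prod.ext_iff, Fin.ext_iff]; try omega)

lemma Rval_diag (n : ℕ) (q qi : A) (a b : Fin n) (hab : a ≠ b) :
    Rmat A q qi n (a,b) (a,b) = 1 := by
  simp [Rmat, hab]

lemma Rval_swap (n : ℕ) (q qi : A) (a b : Fin n) (hab : a ≠ b) :
    Rmat A q qi n (b,a) (a,b) = if a < b then q - qi else 0 := by
  simp only [Rmat]
  rw [if_neg (fun h => hab h.1.symm), if_neg (fun h => hab h.1.symm)]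
  by_cases h : a < b
  · rw [if_pos h, if_pos (by simp [h])]
  · rw [if_neg h, if_neg (by simp [h])]

theorem RtR (n : ℕ) (q qi : A) (hqinv' : qi * q = 1) :
    (Rmat A q qi n)ᵀ * Rmat A q qi n = 1 + (q - qi) • (Pmat A n * Rmat A q qi n) := by
  ext x y
  have hsum : ((Rmat A q qi n)ᵀ * Rmat A q qi n) x y
      = ∑ z ∈ ({x, (x.2,x.1)} : Finset (Fin n × Fin n)),
          Rmat A q qi n z x * Rmat A q qi n z y := by
    rw [Matrix.mul_apply]
    refine (Finset.sum_subset (Finset.subset_univ _) ?_).symm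
    intro z _ hz
    simp only [Finset.mem_insert, Finset.mem_singleton, not_or] at hz
    rw [Matrix.transpose_apply, R_col_support n q qi z x hz.1 hz.2, zero_mul]
  rw [hsum]
  simp only [Matrix.add_apply, Matrix.smul_apply, Pmul_apply, Matrix.one_apply, smul_eq_mul]
  obtain ⟨a, b⟩ := x
  obtain ⟨c, d⟩ := y
  rcases eq_or_ne a b with hab | hab
  · subst hab
    rw [show ({((a:Fin n),a), (a,a)} : Finset (Fin n × Fin n)) = {(a,a)} by simp,
      Finset.sum_singleton]
    have h1 : Rmat A q qi n (a,a) (a,a) = q := by simp [Rmat]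
    rw [h1]
    simp only [Rmat, Prod.ext_iff]
    split_ifs <;> simp_all [Prod.ext_iff, Fin.ext_iff] <;>
      first
        | omega
        | (rw [sub_mul, hqinv']; noncomm_ring)
        | noncomm_ring
  · rw [Finset.sum_insert (by simp [Prod.ext_iff, Ne.symm hab]),
      Finset.sum_singleton, Rval_diag n q qi a b hab, Rval_swap n q qi a b hab, one_mul]
    rcases Fin.lt_or_lt_of_ne hab with hlt | hlt
    · rw [if_pos hlt]
      have h2 : Rmat A q qi n (a,b) (c,d) = if (a,b) = ((c,d) : Fin n × Fin n) then 1 else 0 := by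
        simp only [Rmat, Prod.ext_iff]
        split_ifs <;> first | rfl | (exfalso; simp_all [Prod.ext_iff, Fin.ext_iff]; try omega)
      rw [h2]
    · rw [if_neg (by omega), zero_mul, add_zero]
      have h2 : Rmat A q qi n (b,a) (c,d) = if (b,a) = ((c,d) : Fin n × Fin n) then 1 else 0 := by
        simp only [Rmat, Prod.ext_iff]
        split_ifs <;> first | rfl | (exfalso; simp_all [Prod.ext_iff, Fin.ext_iff]; try omega)
      have h3 : Rmat A q qi n (a,b) (c,d)
          = (if (a,b) = ((c,d) : Fin n × Fin n) then 1 else 0)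
            + (q - qi) * (if (b,a) = ((c,d) : Fin n × Fin n) then 1 else 0) := by
        simp only [Rmat, Prod.ext_iff]
        split_ifs <;> (try (exfalso; simp_all [Prod.ext_iff, Fin.ext_iff]; omega)) <;>
          simp_all [Prod.ext_iff, Fin.ext_iff] <;> noncomm_ring
      rw [h2, h3]

lemma smul_one_mul_mat {I : Type*} [Fintype I] [DecidableEq I] (c : A)
    (M : Matrix I I A) : (c • (1 : Matrix I I A)) * M = c • M := by
  ext x y
  simp [Matrix.mul_apply, Matrix.one_apply, ite_mul, Finset.sum_ite_eq, Finset.sum_ite_eq']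

lemma mul_smul_one_mat {I : Type*} [Fintype I] [DecidableEq I] (c : A)
    (hc : ∀ a : A, Commute c a) (M : Matrix I I A) :
    M * (c • (1 : Matrix I I A)) = c • M := by
  ext x y
  simp [Matrix.mul_apply, Matrix.one_apply, mul_ite, Finset.sum_ite_eq, Finset.sum_ite_eq']
  exact (hc _).symm.eq

end MatrixLemmas

/-- vanishing of the bracket expression: `F(k,p) = 0` for `k ≥ p ≥ 0`. -/
theorem stmt12 (q qi : A) (hq : ∀ a : A, Commute q a) (hqi : ∀ a : A, Commute qi a)
    (hqinv : q * qi = 1) (hqinv' : qi * q = 1)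
    (m : ℕ) (hm : 1 ≤ m) (B : Matrix (Fin m) (Fin m) A)
    (hB : Rmat A q qi m * kron B B = kron' B B * Rmat A q qi m) :
    ∀ k p : ℕ, p ≤ k → Fexpr q qi m B k p = 0 := by
  intro k p hpk
  have hcomm : ∀ a : A, Commute (q - qi) a := fun a => (hq a).sub_left (hqi a)
  obtain ⟨ε, hεd⟩ : ∃ ε : Matrix (Fin m × Fin m) (Fin m × Fin m) A,
      ε = (q - qi) • (1 : Matrix (Fin m × Fin m) (Fin m × Fin m) A) := ⟨_, rfl⟩
  have hεl : ∀ M : Matrix (Fin m × Fin m) (Fin m × Fin m) A, ε * M = (q - qi) • M := by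
    intro M; rw [hεd, smul_one_mul_mat]
  have hεr : ∀ M : Matrix (Fin m × Fin m) (Fin m × Fin m) A, M * ε = (q - qi) • M := by
    intro M; rw [hεd, mul_smul_one_mat (q - qi) hcomm]
  have hε : ∀ M : Matrix (Fin m × Fin m) (Fin m × Fin m) A, Commute ε M := by
    intro M
    show ε * M = M * ε
    rw [hεl, hεr]
  have hYB : Rmat A q qi m * (kron B (1 : Matrix (Fin m) (Fin m) A)
        * kron (1 : Matrix (Fin m) (Fin m) A) B)
      = kron (1 : Matrix (Fin m) (Fin m) A) B
        * (kron B (1 : Matrix (Fin m) (Fin m) A) * Rmat A q qi m) := by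
    rw [kron_mul_kron, hB, ← mul_assoc, kron_mul_kron']
  have h0 := bracket0 ε (Pmat A m) (Rmat A q qi m) (Rmat A q qi m)ᵀ
    (kron B (1 : Matrix (Fin m) (Fin m) A)) (kron (1 : Matrix (Fin m) (Fin m) A) B)
    hε (PP_eq_one m) (P_kronB1 m B) (P_kron1B m B) (P_mul_R m q qi)
    (by rw [RtR m q qi hqinv', hεl]) hYB k p hpk
  unfold Fexpr
  simp only [← hεl]
  exact h0
end

section
/- (Entries of M12 commute with the entries of M22·M12⁻¹·M11.) Under the exchange relation for the block matrix M and invertibility of M12, for all indices i, j ∈ Fin m, a ∈ Fin n₂, b ∈ Fin n₁: M12 i j * (M22·N·M11) a b = (M22·N·M11) a b * M12 i j. -/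
open Matrix

variable {A : Type*} [Ring A]

section RmatLemmas
variable (q qi : A)

lemma Rmat_map {p n : ℕ} (f : Fin p → Fin n)
    (hinj : ∀ {a b : Fin p}, f a = f b ↔ a = b)
    (hlt : ∀ {a b : Fin p}, f a < f b ↔ a < b)
    (a b c d : Fin p) :
    Rmat A q qi n (f a, f b) (f c, f d) = Rmat A q qi p (a, b) (c, d) := by
  simp only [Rmat, hinj, hlt]

lemma Rmat_row_ne {n : ℕ} {x1 x2 z1 z2 : Fin n}
    (h : ¬(z1 = x1 ∧ z2 = x2)) (h' : ¬(z1 = x2 ∧ z2 = x1)) :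
    Rmat A q qi n (x1, x2) (z1, z2) = 0 := by
  simp only [Rmat]
  split_ifs
  all_goals try rfl
  all_goals (exfalso; simp only [Fin.ext_iff, Fin.lt_def, not_and, not_lt] at *; omega)

lemma Rmat_row_ne' {n : ℕ} {x1 x2 z1 z2 : Fin n}
    (h : ¬(z1 = x1 ∧ z2 = x2)) (hlt : ¬ x2 < x1) :
    Rmat A q qi n (x1, x2) (z1, z2) = 0 := by
  simp only [Rmat]
  split_ifs
  all_goals try rfl
  all_goals (exfalso; simp only [Fin.ext_iff, Fin.lt_def, not_and, not_lt] at *; omega)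

lemma Rmat_col_ne {n : ℕ} {y1 y2 z1 z2 : Fin n}
    (h : ¬(z1 = y1 ∧ z2 = y2)) (h' : ¬(z1 = y2 ∧ z2 = y1)) :
    Rmat A q qi n (z1, z2) (y1, y2) = 0 := by
  simp only [Rmat]
  split_ifs
  all_goals try rfl
  all_goals (exfalso; simp only [Fin.ext_iff, Fin.lt_def, not_and, not_lt] at *; omega)

lemma Rmat_col_ne' {n : ℕ} {y1 y2 z1 z2 : Fin n}
    (h : ¬(z1 = y1 ∧ z2 = y2)) (hlt : ¬ y1 < y2) :
    Rmat A q qi n (z1, z2) (y1, y2) = 0 := by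
  simp only [Rmat]
  split_ifs
  all_goals try rfl
  all_goals (exfalso; simp only [Fin.ext_iff, Fin.lt_def, not_and, not_lt] at *; omega)

lemma Rmat_diag_ne {n : ℕ} {x1 x2 : Fin n} (hne : x1 ≠ x2) :
    Rmat A q qi n (x1, x2) (x1, x2) = 1 := by
  simp [Rmat, hne]

end RmatLemmas

section KronLemmas

lemma kron_one_mul_one_kron_s14 {k l r s : ℕ} (X : Matrix (Fin k) (Fin l) A)
    (Y : Matrix (Fin r) (Fin s) A) :
    kron X (1 : Matrix (Fin r) (Fin r) A) * kron (1 : Matrix (Fin l) (Fin l) A) Y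
      = kron X Y := by
  ext ⟨i, a⟩ ⟨j, b⟩
  simp [mul_apply, kron, Fintype.sum_prod_type, Matrix.one_apply, ite_mul, mul_ite,
    Finset.sum_ite_eq, Finset.sum_ite_eq']

lemma one_kron_mul_kron_one_s14 {k l r s : ℕ} (X : Matrix (Fin k) (Fin l) A)
    (Y : Matrix (Fin r) (Fin s) A) :
    kron (1 : Matrix (Fin k) (Fin k) A) Y * kron X (1 : Matrix (Fin s) (Fin s) A)
      = kron' X Y := by
  ext ⟨i, a⟩ ⟨j, b⟩
  simp [mul_apply, kron, kron', Fintype.sum_prod_type, Matrix.one_apply, ite_mul, mul_ite,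
    Finset.sum_ite_eq, Finset.sum_ite_eq']

lemma one_kron_mul_one_kron_s14 {k r s t : ℕ} (Y : Matrix (Fin r) (Fin s) A)
    (Z : Matrix (Fin s) (Fin t) A) :
    kron (1 : Matrix (Fin k) (Fin k) A) Y * kron (1 : Matrix (Fin k) (Fin k) A) Z
      = kron (1 : Matrix (Fin k) (Fin k) A) (Y * Z) := by
  ext ⟨i, a⟩ ⟨j, b⟩
  simp [mul_apply, kron, Fintype.sum_prod_type, Matrix.one_apply, ite_mul, mul_ite,
    Finset.sum_ite_eq, Finset.sum_ite_eq', Finset.mul_sum]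

lemma one_kron_one {k r : ℕ} :
    kron (1 : Matrix (Fin k) (Fin k) A) (1 : Matrix (Fin r) (Fin r) A) = 1 := by
  ext ⟨i, a⟩ ⟨j, b⟩
  simp only [kron, Matrix.one_apply, Prod.mk.injEq]
  split_ifs <;> simp_all

end KronLemmas

section Embed
variable (q qi : A) {u v : ℕ}

lemma cast_ne_nat (i : Fin u) (a : Fin v) : Fin.castAdd v i ≠ Fin.natAdd u a := by
  simp only [ne_eq, Fin.ext_iff, Fin.coe_castAdd, Fin.coe_natAdd]; omega

lemma not_nat_lt_cast (i : Fin u) (a : Fin v) : ¬ (Fin.natAdd u a < Fin.castAdd v i) := by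
  simp only [not_lt, Fin.le_def, Fin.coe_castAdd, Fin.coe_natAdd]; omega

lemma R_cccc (i i' p p' : Fin u) :
    Rmat A q qi (u + v) (Fin.castAdd v i, Fin.castAdd v i') (Fin.castAdd v p, Fin.castAdd v p')
      = Rmat A q qi u (i, i') (p, p') :=
  Rmat_map q qi _ (fun {a b} => by simp only [Fin.ext_iff, Fin.coe_castAdd])
    (fun {a b} => by simp only [Fin.lt_def, Fin.coe_castAdd]) i i' p p'

lemma R_nnnn (i i' p p' : Fin v) :
    Rmat A q qi (u + v) (Fin.natAdd u i, Fin.natAdd u i') (Fin.natAdd u p, Fin.natAdd u p')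
      = Rmat A q qi v (i, i') (p, p') :=
  Rmat_map q qi _ (fun {a b} => by simp only [Fin.ext_iff, Fin.coe_natAdd]; omega)
    (fun {a b} => by simp only [Fin.lt_def, Fin.coe_natAdd]; omega) i i' p p'

lemma Rrow_cc_cn (i i' : Fin u) (p : Fin u) (p' : Fin v) :
    Rmat A q qi (u + v) (Fin.castAdd v i, Fin.castAdd v i') (Fin.castAdd v p, Fin.natAdd u p') = 0 :=
  Rmat_row_ne q qi (fun h => cast_ne_nat i' p' h.2.symm) (fun h => cast_ne_nat i p' h.2.symm)

lemma Rrow_cc_nc (i i' : Fin u) (p : Fin v) (p' : Fin u) :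
    Rmat A q qi (u + v) (Fin.castAdd v i, Fin.castAdd v i') (Fin.natAdd u p, Fin.castAdd v p') = 0 :=
  Rmat_row_ne q qi (fun h => cast_ne_nat i p h.1.symm) (fun h => cast_ne_nat i' p h.1.symm)

lemma Rrow_cc_nn (i i' : Fin u) (p p' : Fin v) :
    Rmat A q qi (u + v) (Fin.castAdd v i, Fin.castAdd v i') (Fin.natAdd u p, Fin.natAdd u p') = 0 :=
  Rmat_row_ne q qi (fun h => cast_ne_nat i p h.1.symm) (fun h => cast_ne_nat i' p h.1.symm)

lemma Rcol_nn_cc (j j' : Fin v) (p p' : Fin u) :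
    Rmat A q qi (u + v) (Fin.castAdd v p, Fin.castAdd v p') (Fin.natAdd u j, Fin.natAdd u j') = 0 :=
  Rmat_col_ne q qi (fun h => cast_ne_nat p j h.1) (fun h => cast_ne_nat p j' h.1)

lemma Rcol_nn_cn (j j' : Fin v) (p : Fin u) (p' : Fin v) :
    Rmat A q qi (u + v) (Fin.castAdd v p, Fin.natAdd u p') (Fin.natAdd u j, Fin.natAdd u j') = 0 :=
  Rmat_col_ne q qi (fun h => cast_ne_nat p j h.1) (fun h => cast_ne_nat p j' h.1)

lemma Rcol_nn_nc (j j' : Fin v) (p : Fin v) (p' : Fin u) :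
    Rmat A q qi (u + v) (Fin.natAdd u p, Fin.castAdd v p') (Fin.natAdd u j, Fin.natAdd u j') = 0 :=
  Rmat_col_ne q qi (fun h => cast_ne_nat p' j' h.2) (fun h => cast_ne_nat p' j h.2)


lemma R_cncn (i p : Fin u) (a p' : Fin v) :
    Rmat A q qi (u + v) (Fin.castAdd v i, Fin.natAdd u a) (Fin.castAdd v p, Fin.natAdd u p')
      = if p = i ∧ p' = a then (1 : A) else 0 := by
  by_cases h : p = i ∧ p' = a
  · obtain ⟨rfl, rfl⟩ := h
    rw [if_pos ⟨rfl, rfl⟩]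
    exact Rmat_diag_ne q qi (cast_ne_nat p p')
  · rw [if_neg h]
    refine Rmat_row_ne' q qi (fun hc => h ?_) (not_nat_lt_cast i a)
    exact ⟨Fin.castAdd_inj.mp hc.1, by
      have := congrArg Fin.val hc.2
      simp only [Fin.coe_natAdd] at this
      exact Fin.ext (by omega)⟩

lemma R_ncnc (p j : Fin v) (b' b : Fin u) :
    Rmat A q qi (u + v) (Fin.natAdd u p, Fin.castAdd v b') (Fin.natAdd u j, Fin.castAdd v b)
      = if p = j ∧ b' = b then (1 : A) else 0 := by
  by_cases h : p = j ∧ b' = b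
  · obtain ⟨rfl, rfl⟩ := h
    rw [if_pos ⟨rfl, rfl⟩]
    exact Rmat_diag_ne q qi (Ne.symm (cast_ne_nat b' p))
  · rw [if_neg h]
    refine Rmat_col_ne' q qi (fun hc => h ?_) (not_nat_lt_cast b j)
    refine ⟨?_, Fin.castAdd_inj.mp hc.2⟩
    have := congrArg Fin.val hc.1
    simp only [Fin.coe_natAdd] at this
    exact Fin.ext (by omega)

lemma Rrow_cn_cc (i p p' : Fin u) (a : Fin v) :
    Rmat A q qi (u + v) (Fin.castAdd v i, Fin.natAdd u a) (Fin.castAdd v p, Fin.castAdd v p') = 0 :=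
  Rmat_row_ne' q qi (fun h => cast_ne_nat p' a h.2) (not_nat_lt_cast i a)

lemma Rrow_cn_nc (i p' : Fin u) (a p : Fin v) :
    Rmat A q qi (u + v) (Fin.castAdd v i, Fin.natAdd u a) (Fin.natAdd u p, Fin.castAdd v p') = 0 :=
  Rmat_row_ne' q qi (fun h => cast_ne_nat i p h.1.symm) (not_nat_lt_cast i a)

lemma Rrow_cn_nn (i : Fin u) (a p p' : Fin v) :
    Rmat A q qi (u + v) (Fin.castAdd v i, Fin.natAdd u a) (Fin.natAdd u p, Fin.natAdd u p') = 0 :=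
  Rmat_row_ne' q qi (fun h => cast_ne_nat i p h.1.symm) (not_nat_lt_cast i a)

lemma Rcol_nc_cx (j : Fin v) (b : Fin u) (b' : Fin u) {z2 : Fin (u+v)} :
    Rmat A q qi (u + v) (Fin.castAdd v b', z2) (Fin.natAdd u j, Fin.castAdd v b) = 0 :=
  Rmat_col_ne' q qi (fun h => cast_ne_nat b' j h.1) (not_nat_lt_cast b j)

lemma Rcol_nc_nn (j p : Fin v) (b : Fin u) (p' : Fin v) :
    Rmat A q qi (u + v) (Fin.natAdd u p, Fin.natAdd u p') (Fin.natAdd u j, Fin.castAdd v b) = 0 :=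
  Rmat_col_ne' q qi (fun h => cast_ne_nat b p' h.2.symm) (not_nat_lt_cast b j)

end Embed

section Extract
variable (q qi : A) {m n₁ n₂ : ℕ}
variable (M11 : Matrix (Fin m) (Fin n₁) A) (M12 : Matrix (Fin m) (Fin m) A)
    (M21 : Matrix (Fin n₂) (Fin n₁) A) (M22 : Matrix (Fin n₂) (Fin m) A)

local notation "Mh" => Matrix.reindex finSumFinEquiv finSumFinEquiv (fromBlocks M11 M12 M21 M22)

lemma Mh_cc (i : Fin m) (b : Fin n₁) : Mh (Fin.castAdd n₂ i) (Fin.castAdd m b) = M11 i b := by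
  rw [← finSumFinEquiv_apply_left, ← finSumFinEquiv_apply_left]
  simp

lemma Mh_cn (i : Fin m) (j : Fin m) : Mh (Fin.castAdd n₂ i) (Fin.natAdd n₁ j) = M12 i j := by
  rw [← finSumFinEquiv_apply_left, ← finSumFinEquiv_apply_right]
  simp

lemma Mh_nc (a : Fin n₂) (b : Fin n₁) : Mh (Fin.natAdd m a) (Fin.castAdd m b) = M21 a b := by
  rw [← finSumFinEquiv_apply_right, ← finSumFinEquiv_apply_left]
  simp

lemma Mh_nn (a : Fin n₂) (j : Fin m) : Mh (Fin.natAdd m a) (Fin.natAdd n₁ j) = M22 a j := by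
  rw [← finSumFinEquiv_apply_right, ← finSumFinEquiv_apply_right]
  simp

lemma extract2
    (hex : Rmat A q qi (m + n₂) * kron Mh Mh = kron' Mh Mh * Rmat A q qi (n₁ + m)) :
    Rmat A q qi m * kron M12 M12 = kron' M12 M12 * Rmat A q qi m := by
  ext ⟨i, i'⟩ ⟨j, j'⟩
  have h := Matrix.ext_iff.2 hex (Fin.castAdd n₂ i, Fin.castAdd n₂ i')
    (Fin.natAdd n₁ j, Fin.natAdd n₁ j')
  simp only [mul_apply, Fintype.sum_prod_type, Fin.sum_univ_add, kron, kron',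
    R_cccc, R_nnnn, Rrow_cc_cn, Rrow_cc_nc, Rrow_cc_nn,
    Rcol_nn_cc, Rcol_nn_cn, Rcol_nn_nc,
    Mh_cc, Mh_cn, Mh_nc, Mh_nn,
    zero_mul, mul_zero, Finset.sum_const_zero, add_zero, zero_add] at h
  simp only [mul_apply, Fintype.sum_prod_type, kron, kron']
  exact h

end Extract

section Extract2
variable (q qi : A) {m n₁ n₂ : ℕ}
variable (M11 : Matrix (Fin m) (Fin n₁) A) (M12 : Matrix (Fin m) (Fin m) A)
    (M21 : Matrix (Fin n₂) (Fin n₁) A) (M22 : Matrix (Fin n₂) (Fin m) A)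

local notation "Mh" => Matrix.reindex finSumFinEquiv finSumFinEquiv (fromBlocks M11 M12 M21 M22)

lemma extract1
    (hex : Rmat A q qi (m + n₂) * kron Mh Mh = kron' Mh Mh * Rmat A q qi (n₁ + m)) :
    kron M12 M22 = kron' M12 M22 * Rmat A q qi m := by
  ext ⟨i, a⟩ ⟨j, k⟩
  have h := Matrix.ext_iff.2 hex (Fin.castAdd n₂ i, Fin.natAdd m a)
    (Fin.natAdd n₁ j, Fin.natAdd n₁ k)
  simp only [mul_apply, Fintype.sum_prod_type, Fin.sum_univ_add, kron, kron',
    R_cncn, R_nnnn, Rrow_cn_cc, Rrow_cn_nc, Rrow_cn_nn,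
    Rcol_nn_cc, Rcol_nn_cn, Rcol_nn_nc,
    Mh_cc, Mh_cn, Mh_nc, Mh_nn,
    ite_and, ite_mul, one_mul, zero_mul, mul_zero, Finset.sum_const_zero, add_zero, zero_add,
    Finset.sum_ite_eq, Finset.sum_ite_eq', Finset.mem_univ, if_true] at h
  rw [show (∑ x : Fin m, ∑ x_1 : Fin n₂,
      if x = i then if x_1 = a then M12 x j * M22 x_1 k else 0 else 0)
      = M12 i j * M22 a k from by simp] at h
  simp only [mul_apply, Fintype.sum_prod_type, kron, kron']
  exact h

lemma extract3
    (hex : Rmat A q qi (m + n₂) * kron Mh Mh = kron' Mh Mh * Rmat A q qi (n₁ + m)) :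
    Rmat A q qi m * kron M12 M11 = kron' M12 M11 := by
  ext ⟨i, i'⟩ ⟨j, b⟩
  have h := Matrix.ext_iff.2 hex (Fin.castAdd n₂ i, Fin.castAdd n₂ i')
    (Fin.natAdd n₁ j, Fin.castAdd m b)
  simp only [mul_apply, Fintype.sum_prod_type, Fin.sum_univ_add, kron, kron',
    R_cccc, R_ncnc, Rrow_cc_cn, Rrow_cc_nc, Rrow_cc_nn,
    Rcol_nc_cx, Rcol_nc_nn,
    Mh_cc, Mh_cn, Mh_nc, Mh_nn,
    ite_and, ite_mul, mul_ite, mul_one, one_mul, zero_mul, mul_zero,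
    Finset.sum_const_zero, add_zero, zero_add,
    Finset.sum_ite_eq, Finset.sum_ite_eq', Finset.mem_univ, if_true] at h
  rw [show (∑ x : Fin m, ∑ x_1 : Fin n₁,
      if x = j then if x_1 = b then M11 i' x_1 * M12 i x else 0 else 0)
      = M11 i' b * M12 i j from by simp] at h
  simp only [mul_apply, Fintype.sum_prod_type, kron, kron']
  exact h

end Extract2

/-- entries of `M12` commute with the entries of `M22·M12⁻¹·M11`. -/
theorem stmt14 (q qi : A) (hq : ∀ a : A, Commute q a) (hqi : ∀ a : A, Commute qi a)
    (hqinv : q * qi = 1) (hqinv' : qi * q = 1)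
    (m n₁ n₂ : ℕ) (hm : 1 ≤ m) (hn₁ : 1 ≤ n₁) (hn₂ : 1 ≤ n₂)
    (M11 : Matrix (Fin m) (Fin n₁) A) (M12 : Matrix (Fin m) (Fin m) A)
    (M21 : Matrix (Fin n₂) (Fin n₁) A) (M22 : Matrix (Fin n₂) (Fin m) A)
    (hex : Rmat A q qi (m + n₂) *
        kron (Matrix.reindex finSumFinEquiv finSumFinEquiv (fromBlocks M11 M12 M21 M22))
          (Matrix.reindex finSumFinEquiv finSumFinEquiv (fromBlocks M11 M12 M21 M22)) =
      kron' (Matrix.reindex finSumFinEquiv finSumFinEquiv (fromBlocks M11 M12 M21 M22))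
          (Matrix.reindex finSumFinEquiv finSumFinEquiv (fromBlocks M11 M12 M21 M22)) *
        Rmat A q qi (n₁ + m))
    (N : Matrix (Fin m) (Fin m) A) (hN : M12 * N = 1) (hN' : N * M12 = 1) :
    ∀ (i j : Fin m) (a : Fin n₂) (b : Fin n₁),
      M12 i j * (M22 * N * M11) a b = (M22 * N * M11) a b * M12 i j := by
  have k1 := extract1 q qi M11 M12 M21 M22 hex
  have k2 := extract2 q qi M11 M12 M21 M22 hex
  have k3 := extract3 q qi M11 M12 M21 M22 hex
  set R := Rmat A q qi m with hR
  have K1 : kron M12 (1 : Matrix (Fin n₂) (Fin n₂) A) * kron (1 : Matrix (Fin m) (Fin m) A) M22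
      = kron (1 : Matrix (Fin m) (Fin m) A) M22 * (kron M12 (1 : Matrix (Fin m) (Fin m) A) * R) := by
    rw [kron_one_mul_one_kron_s14, k1, ← one_kron_mul_kron_one_s14, Matrix.mul_assoc]
  have K2 : R * (kron M12 (1 : Matrix (Fin m) (Fin m) A) * kron (1 : Matrix (Fin m) (Fin m) A) M12)
      = kron (1 : Matrix (Fin m) (Fin m) A) M12 * (kron M12 (1 : Matrix (Fin m) (Fin m) A) * R) := by
    rw [kron_one_mul_one_kron_s14, k2, ← one_kron_mul_kron_one_s14, Matrix.mul_assoc]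
  have K3 : R * (kron M12 (1 : Matrix (Fin m) (Fin m) A) * kron (1 : Matrix (Fin m) (Fin m) A) M11)
      = kron (1 : Matrix (Fin m) (Fin m) A) M11 * kron M12 (1 : Matrix (Fin n₁) (Fin n₁) A) := by
    rw [kron_one_mul_one_kron_s14, k3, ← one_kron_mul_kron_one_s14]
  -- parametric versions
  have K1' : kron M12 (1 : Matrix (Fin n₂) (Fin n₂) A) *
        (kron (1 : Matrix (Fin m) (Fin m) A) M22 *
          (kron (1 : Matrix (Fin m) (Fin m) A) N * kron (1 : Matrix (Fin m) (Fin m) A) M11))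
      = kron (1 : Matrix (Fin m) (Fin m) A) M22 *
        (kron M12 (1 : Matrix (Fin m) (Fin m) A) *
          (R * (kron (1 : Matrix (Fin m) (Fin m) A) N * kron (1 : Matrix (Fin m) (Fin m) A) M11))) := by
    have h := congrArg
      (· * (kron (1 : Matrix (Fin m) (Fin m) A) N * kron (1 : Matrix (Fin m) (Fin m) A) M11)) K1
    simp only [Matrix.mul_assoc] at h
    exact h
  have K2' : R * (kron M12 (1 : Matrix (Fin m) (Fin m) A) *
        (kron (1 : Matrix (Fin m) (Fin m) A) M12 *
          (kron (1 : Matrix (Fin m) (Fin m) A) N * kron (1 : Matrix (Fin m) (Fin m) A) M11)))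
      = kron (1 : Matrix (Fin m) (Fin m) A) M12 * (kron M12 (1 : Matrix (Fin m) (Fin m) A) *
          (R * (kron (1 : Matrix (Fin m) (Fin m) A) N * kron (1 : Matrix (Fin m) (Fin m) A) M11))) := by
    have h := congrArg
      (· * (kron (1 : Matrix (Fin m) (Fin m) A) N * kron (1 : Matrix (Fin m) (Fin m) A) M11)) K2
    simp only [Matrix.mul_assoc] at h
    exact h
  have K6' : kron M12 (1 : Matrix (Fin m) (Fin m) A) *
        (R * (kron (1 : Matrix (Fin m) (Fin m) A) N * kron (1 : Matrix (Fin m) (Fin m) A) M11))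
      = kron (1 : Matrix (Fin m) (Fin m) A) N *
        (R * (kron M12 (1 : Matrix (Fin m) (Fin m) A) * kron (1 : Matrix (Fin m) (Fin m) A) M11)) := by
    calc kron M12 (1 : Matrix (Fin m) (Fin m) A) *
          (R * (kron (1 : Matrix (Fin m) (Fin m) A) N * kron (1 : Matrix (Fin m) (Fin m) A) M11))
        = kron (1 : Matrix (Fin m) (Fin m) A) N * (kron (1 : Matrix (Fin m) (Fin m) A) M12 *
            (kron M12 (1 : Matrix (Fin m) (Fin m) A) *
              (R * (kron (1 : Matrix (Fin m) (Fin m) A) N *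
                kron (1 : Matrix (Fin m) (Fin m) A) M11)))) := by
          rw [← Matrix.mul_assoc (kron (1 : Matrix (Fin m) (Fin m) A) N)
            (kron (1 : Matrix (Fin m) (Fin m) A) M12), one_kron_mul_one_kron_s14 N M12, hN',
            one_kron_one, Matrix.one_mul]
      _ = kron (1 : Matrix (Fin m) (Fin m) A) N *
            (R * (kron M12 (1 : Matrix (Fin m) (Fin m) A) *
              (kron (1 : Matrix (Fin m) (Fin m) A) M12 *
                (kron (1 : Matrix (Fin m) (Fin m) A) N *
                  kron (1 : Matrix (Fin m) (Fin m) A) M11)))) := by rw [← K2']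
      _ = kron (1 : Matrix (Fin m) (Fin m) A) N *
            (R * (kron M12 (1 : Matrix (Fin m) (Fin m) A) *
              kron (1 : Matrix (Fin m) (Fin m) A) M11)) := by
          rw [← Matrix.mul_assoc (kron (1 : Matrix (Fin m) (Fin m) A) M12)
            (kron (1 : Matrix (Fin m) (Fin m) A) N), one_kron_mul_one_kron_s14 M12 N, hN,
            one_kron_one, Matrix.one_mul]
  have main : kron M12 (M22 * N * M11) = kron' M12 (M22 * N * M11) := by
    rw [← kron_one_mul_one_kron_s14 M12 (M22 * N * M11), ← one_kron_mul_kron_one_s14 M12 (M22 * N * M11)]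
    rw [show kron (1 : Matrix (Fin m) (Fin m) A) (M22 * N * M11)
        = kron (1 : Matrix (Fin m) (Fin m) A) M22 *
          (kron (1 : Matrix (Fin m) (Fin m) A) N * kron (1 : Matrix (Fin m) (Fin m) A) M11) from by
      rw [one_kron_mul_one_kron_s14 N M11, one_kron_mul_one_kron_s14 M22 (N * M11), Matrix.mul_assoc]]
    rw [K1', K6', K3]
    simp only [Matrix.mul_assoc]
  intro i j a b
  exact Matrix.ext_iff.2 main (i, a) (j, b)
end
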